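/- arXiv:2311.09906 — 10 statements merged into one kernel-verified Lean document; each statement's English description precedes it below -/
import Mathlib

section
/- Let K be a field of characteristic zero, n a positive integer, and A, B ∈ Matₙ(K) square matrices. If AB − BA = c·A for some scalar c ≠ 0, then A is nilpotent. -/
theorem nilpotent_of_bracket_eq_smul
    {K : Type*} [Field K] [CharZero K] {n : ℕ} (hn : 0 < n)
    (A B : Matrix (Fin n) (Fin n) K) (c : K) (hc : c ≠ 0)
    (h : A * B - B * A = c • A) :
    IsNilpotent A := by
  by_contra hA
  -- A^k * B - B * A^k = (k * c) • A^k
  have key : ∀ k : ℕ, A ^ k * B - B * A ^ k = ((k : K) * c) • A ^ k := by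
    intro k
    induction k with
    | zero => simp
    | succ m ih =>
      have e1 : A ^ m * B = B * A ^ m + ((m : K) * c) • A ^ m := sub_eq_iff_eq_add'.mp ih
      have e2 : A * B = B * A + c • A := sub_eq_iff_eq_add'.mp h
      rw [pow_succ, mul_assoc, e2, mul_add, ← mul_assoc, e1, Nat.cast_succ,
        add_mul, Matrix.smul_mul, Matrix.mul_smul, mul_assoc B]
      module
  -- the linear endomorphism X ↦ X * B - B * X
  let f : Module.End K (Matrix (Fin n) (Fin n) K) :=
    LinearMap.mulRight K B - LinearMap.mulLeft K B
  have hfeig : ∀ k : ℕ, f.HasEigenvalue ((k + 1 : ℕ) * c) := by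
    intro k
    have hk : A ^ (k + 1) ≠ 0 := fun h0 => hA ⟨k + 1, h0⟩
    refine Module.End.hasEigenvalue_of_hasEigenvector (x := A ^ (k + 1)) ⟨?_, hk⟩
    rw [Module.End.mem_eigenspace_iff]
    simpa [f, LinearMap.sub_apply, LinearMap.mulRight_apply, LinearMap.mulLeft_apply]
      using key (k + 1)
  have hinj : Function.Injective fun k : ℕ => ((k + 1 : ℕ) * c : K) := by
    intro a b hab
    simp only [mul_eq_mul_right_iff, hc, or_false] at hab
    exact_mod_cast Nat.succ_injective (Nat.cast_injective hab)
  exact (f.finite_hasEigenvalue).not_infinite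
    (Set.infinite_of_injective_forall_mem hinj hfeig)
end

section
/- Let g be a finite-dimensional unimodular real Lie algebra containing an abelian ideal a of codimension 2, and J a complex structure on g with J(a) ≠ a and [g,g] ⊄ a. Set a_J := a ∩ J(a), a' := a + [g,g], 𝔟 := a ∩ J(a'). Then: (i) a_J is an ideal of g; (ii) a' has codimension 1 in g and a_J has codimension 4 in g; (iii) the inclusions a_J ⊊ 𝔟 ⊊ a ⊊ a' ⊊ g are all strict; (iv) if x ∈ 𝔟 \ a_J then Jx ∈ a' \ a, and if y ∈ a \ 𝔟 then Jy ∉ a'. -/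
open Module

section Defs

variable {L : Type*} [LieRing L] [LieAlgebra ℝ L]

/-- A complex structure on a real Lie algebra: `J² = -id` plus integrability. -/
def IsComplexStructure (J : L →ₗ[ℝ] L) : Prop :=
  (∀ x : L, J (J x) = -x) ∧
  (∀ x y : L, ⁅x, y⁆ - ⁅J x, J y⁆ + J ⁅J x, y⁆ + J ⁅x, J y⁆ = 0)

/-- A Lie algebra is unimodular if every `ad x` is traceless. -/
def IsUnimodularLie (L : Type*) [LieRing L] [LieAlgebra ℝ L] : Prop :=
  ∀ x : L, LinearMap.trace ℝ L (LieAlgebra.ad ℝ L x) = 0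

/-- A Hermitian metric on `(L, J)`: a `J`-compatible inner product. -/
structure HermMetric (J : L →ₗ[ℝ] L) : Type _ where
  B : L →ₗ[ℝ] L →ₗ[ℝ] ℝ
  symm : ∀ x y : L, B x y = B y x
  posdef : ∀ x : L, x ≠ 0 → 0 < B x x
  compat : ∀ x y : L, B (J x) (J y) = B x y

variable {J : L →ₗ[ℝ] L}

/-- The Kähler form `ω(x,y) = ⟨Jx, y⟩`. -/
def HermMetric.omega (g : HermMetric J) (x y : L) : ℝ := g.B (J x) y

/-- Exterior differential of the Kähler form. -/
def HermMetric.dOmega (g : HermMetric J) (x y z : L) : ℝ :=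
  - g.omega ⁅x, y⁆ z + g.omega ⁅x, z⁆ y - g.omega ⁅y, z⁆ x

/-- `dᶜω (x,y,z) = -dω(Jx, Jy, Jz)`. -/
def HermMetric.dcOmega (g : HermMetric J) (x y z : L) : ℝ :=
  - g.dOmega (J x) (J y) (J z)

/-- `d(dᶜω)` as a 4-form. -/
def HermMetric.ddcOmega (g : HermMetric J) (x y z w : L) : ℝ :=
  - g.dcOmega ⁅x, y⁆ z w + g.dcOmega ⁅x, z⁆ y w - g.dcOmega ⁅x, w⁆ y z
  - g.dcOmega ⁅y, z⁆ x w + g.dcOmega ⁅y, w⁆ x z - g.dcOmega ⁅z, w⁆ x y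

/-- The metric is Kähler if `dω = 0`. -/
def HermMetric.IsKahler (g : HermMetric J) : Prop :=
  ∀ x y z : L, g.dOmega x y z = 0

/-- The metric is pluriclosed if `d(dᶜω) = 0`. -/
def HermMetric.IsPluriclosed (g : HermMetric J) : Prop :=
  ∀ x y z w : L, g.ddcOmega x y z w = 0

/-- The metric is balanced (dimension `2n`): for every orthonormal basis `f`,
`Σ_k dω(f_k, J f_k, x) = 0` for all `x`. -/
def HermMetric.IsBalanced (g : HermMetric J) (n : ℕ) : Prop :=
  ∀ f : Basis (Fin (2 * n)) ℝ L,
    (∀ i j, g.B (f i) (f j) = if i = j then 1 else 0) →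
    ∀ x : L, (∑ k, g.dOmega (f k) (J (f k)) x) = 0

end Defs

section Aux
variable {L : Type*} [LieRing L] [LieAlgebra ℝ L]

lemma my_even_finrank_of_sq_neg_one {V : Type*} [AddCommGroup V] [Module ℝ V]
    [FiniteDimensional ℝ V] (f : V →ₗ[ℝ] V) (hf : ∀ x, f (f x) = -x) :
    Even (finrank ℝ V) := by
  have hsq : f * f = -1 := by ext x; simpa using hf x
  let φ : ℂ →ₐ[ℝ] (Module.End ℝ V) := Complex.lift ⟨f, hsq⟩
  letI : Module ℂ V := Module.compHom V φ.toRingHom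
  have hsmul : ∀ (z : ℂ) (v : V), z • v = φ z v := fun z v => rfl
  letI : IsScalarTower ℝ ℂ V := by
    refine IsScalarTower.of_algebraMap_smul ?_
    intro r v
    rw [hsmul, φ.commutes]
    simp [Module.algebraMap_end_apply]
  have h := finrank_mul_finrank ℝ ℂ V
  rw [Complex.finrank_real_complex] at h
  exact ⟨finrank ℂ V, by omega⟩

lemma my_bracket_decomp (x y w w' : L) (s t s' t' : ℝ) :
    ⁅w + (s•x + t•y), w' + (s'•x + t'•y)⁆
      = ⁅w, w' + (s'•x + t'•y)⁆ + s•⁅x,w'⁆ + t•⁅y,w'⁆ + (s*t'-t*s')•⁅x,y⁆ := by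
  have hyx : ⁅y,x⁆ = -⁅x,y⁆ := (lie_skew y x) ▸ rfl
  simp only [add_lie, lie_add, smul_lie, lie_smul, lie_self, smul_zero, add_zero, zero_add,
    smul_neg, hyx]
  module

end Aux

theorem stmt4
    {L : Type*} [LieRing L] [LieAlgebra ℝ L] [FiniteDimensional ℝ L]
    (a : LieIdeal ℝ L)
    (habel : ∀ u ∈ a.toSubmodule, ∀ v ∈ a.toSubmodule, ⁅u, v⁆ = (0 : L))
    (hcodim : finrank ℝ ↥a.toSubmodule + 2 = finrank ℝ L)
    (J : L →ₗ[ℝ] L) (hJ : IsComplexStructure J)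
    (huni : IsUnimodularLie L)
    (hJa : a.toSubmodule.map J ≠ a.toSubmodule)
    (hnonab : ¬ ∀ u v : L, ⁅u, v⁆ ∈ a.toSubmodule)
    (aJ a' bb : Submodule ℝ L)
    (haJ : aJ = a.toSubmodule ⊓ a.toSubmodule.map J)
    (ha' : a' = a.toSubmodule ⊔ Submodule.span ℝ {z : L | ∃ u v : L, ⁅u, v⁆ = z})
    (hbb : bb = a.toSubmodule ⊓ a'.map J)
    :
    (∀ z : L, ∀ u ∈ aJ, ⁅z, u⁆ ∈ aJ) ∧
    (finrank ℝ ↥a' + 1 = finrank ℝ L ∧ finrank ℝ ↥aJ + 4 = finrank ℝ L) ∧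
    (aJ < bb ∧ bb < a.toSubmodule ∧ a.toSubmodule < a' ∧ a' < ⊤) ∧
    ((∀ x ∈ bb, x ∉ aJ → J x ∈ a' ∧ J x ∉ a.toSubmodule) ∧
     (∀ y ∈ a.toSubmodule, y ∉ bb → J y ∉ a')) := by
  obtain ⟨hJ2, hint⟩ := hJ
  set A := a.toSubmodule with hA
  -- basic facts about J
  have hJe : ∃ e : L ≃ₗ[ℝ] L, (e : L →ₗ[ℝ] L) = J := by
    refine ⟨LinearEquiv.ofLinear J (-J) ?_ ?_, rfl⟩ <;>
      · ext v; simp [hJ2 v]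
  obtain ⟨e, he⟩ := hJe
  have hmapJ_rank : ∀ p : Submodule ℝ L, finrank ℝ (p.map J) = finrank ℝ p := by
    intro p; rw [← he]; exact e.finrank_map_eq p
  have hmemJ : ∀ (p : Submodule ℝ L) (x : L), x ∈ p.map J ↔ J x ∈ p := by
    intro p x
    constructor
    · rintro ⟨v, hv, rfl⟩
      rw [hJ2 v]; exact p.neg_mem hv
    · intro h
      exact ⟨-(J x), p.neg_mem h, by rw [map_neg, hJ2, neg_neg]⟩
  -- the ideal property of A
  have hlie : ∀ (z u : L), u ∈ A → ⁅z, u⁆ ∈ A := fun z u hu => a.lie_mem hu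
  have hlie' : ∀ (u z : L), u ∈ A → ⁅u, z⁆ ∈ A := by
    intro u z hu
    rw [← lie_skew]
    exact A.neg_mem (hlie z u hu)
  -- choose x, y spanning a complement of A
  have hq : finrank ℝ (L ⧸ A) = 2 := by
    have := Submodule.finrank_quotient_add_finrank A; omega
  let b : Basis (Fin 2) ℝ (L ⧸ A) := finBasisOfFinrankEq ℝ (L ⧸ A) hq
  obtain ⟨x, hx⟩ := Submodule.mkQ_surjective A (b 0)
  obtain ⟨y, hy⟩ := Submodule.mkQ_surjective A (b 1)
  have hdecomp : ∀ u : L, ∃ s t : ℝ, u - (s•x + t•y) ∈ A := by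
    intro u
    refine ⟨b.repr (A.mkQ u) 0, b.repr (A.mkQ u) 1, ?_⟩
    have h0 : A.mkQ (u - ((b.repr (A.mkQ u)) 0 • x + (b.repr (A.mkQ u)) 1 • y)) = 0 := by
      rw [map_sub, map_add, map_smul, map_smul, hx, hy, sub_eq_zero]
      have := b.sum_repr (A.mkQ u)
      rw [Fin.sum_univ_two] at this
      exact this.symm
    have hker : u - ((b.repr (A.mkQ u)) 0 • x + (b.repr (A.mkQ u)) 1 • y) ∈ LinearMap.ker A.mkQ :=
      LinearMap.mem_ker.2 h0
    rwa [Submodule.ker_mkQ] at hker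
  -- every bracket lies in A ⊔ span{⁅x,y⁆}
  set c := ⁅x, y⁆ with hc
  have hbr : ∀ u v : L, ⁅u, v⁆ ∈ A ⊔ Submodule.span ℝ {c} := by
    intro u v
    obtain ⟨s, t, hw⟩ := hdecomp u
    obtain ⟨s', t', hw'⟩ := hdecomp v
    have hu' : u = (u - (s•x + t•y)) + (s•x + t•y) := by abel
    have hv' : v = (v - (s'•x + t'•y)) + (s'•x + t'•y) := by abel
    have key := my_bracket_decomp x y (u - (s•x + t•y)) (v - (s'•x + t'•y)) s t s' t'
    rw [← hv', ← hu'] at key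
    rw [key]
    refine Submodule.add_mem _ (Submodule.add_mem _ (Submodule.add_mem _ ?_ ?_) ?_) ?_
    · exact Submodule.mem_sup_left (hlie' _ _ hw)
    · exact Submodule.mem_sup_left (Submodule.smul_mem _ _ (hlie _ _ hw'))
    · exact Submodule.mem_sup_left (Submodule.smul_mem _ _ (hlie _ _ hw'))
    · exact Submodule.mem_sup_right (Submodule.smul_mem _ _
        (Submodule.subset_span (Set.mem_singleton c)))
  -- a' is between A and A ⊔ span{c}, and strictly bigger than A
  have ha'le : a' ≤ A ⊔ Submodule.span ℝ {c} := by
    rw [ha']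
    refine sup_le le_sup_left (Submodule.span_le.2 ?_)
    rintro z ⟨u, v, rfl⟩
    exact hbr u v
  push_neg at hnonab
  obtain ⟨u₀, v₀, hbr₀⟩ := hnonab
  have hAlt : A < a' := by
    rw [ha']
    refine lt_of_le_of_ne le_sup_left ?_
    intro h
    exact hbr₀ (h ▸ Submodule.mem_sup_right (Submodule.subset_span ⟨u₀, v₀, rfl⟩))
  have hr_a' : finrank ℝ a' = finrank ℝ A + 1 := by
    have h1 : finrank ℝ A < finrank ℝ a' := Submodule.finrank_lt_finrank_of_lt hAlt
    have h2 : finrank ℝ a' ≤ finrank ℝ A + 1 := by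
      have hle' : finrank ℝ a' ≤ finrank ℝ ↥(A ⊔ Submodule.span ℝ {c}) :=
        Submodule.finrank_mono ha'le
      have h3 := Submodule.finrank_sup_add_finrank_inf_eq A (Submodule.span ℝ {c})
      have h4 : finrank ℝ (Submodule.span ℝ {c}) ≤ 1 := by
        by_cases hc0 : c = 0
        · rw [hc0, Submodule.span_zero_singleton]
          simp
        · rw [finrank_span_singleton hc0]
      omega
    omega
  -- evenness
  have hLeven : Even (finrank ℝ L) := my_even_finrank_of_sq_neg_one J hJ2
  have heven_sub : ∀ (W : Submodule ℝ L), (∀ z ∈ W, J z ∈ W) → Even (finrank ℝ W) := by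
    intro W hW
    exact my_even_finrank_of_sq_neg_one (J.restrict hW)
      (fun ⟨z, hz⟩ => Subtype.ext (hJ2 z))
  -- W = A ⊔ J A is all of L
  set W := A ⊔ A.map J with hW
  have hWJ : ∀ z ∈ W, J z ∈ W := by
    intro z hz
    rw [hW, Submodule.mem_sup] at hz
    obtain ⟨p, hp, q, hq, rfl⟩ := hz
    rw [map_add]
    refine Submodule.add_mem _ (Submodule.mem_sup_right (Submodule.mem_map_of_mem hp)) ?_
    exact Submodule.mem_sup_left ((hmemJ A q).1 hq)
  have hJnle : ¬ A.map J ≤ A := by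
    intro h
    exact hJa (Submodule.eq_of_le_of_finrank_le h (by rw [hmapJ_rank]))
  have hAltW : A < W := by
    refine lt_of_le_of_ne le_sup_left ?_
    intro h
    have hle : A.map J ≤ W := le_sup_right
    rw [← h] at hle
    exact hJnle hle
  have hWtop : W = ⊤ := by
    have h1 : finrank ℝ A < finrank ℝ W := Submodule.finrank_lt_finrank_of_lt hAltW
    have h2 : finrank ℝ W ≤ finrank ℝ L := Submodule.finrank_le W
    obtain ⟨k, hk⟩ := heven_sub W hWJ
    obtain ⟨m, hm⟩ := hLeven
    exact Submodule.eq_top_of_finrank_eq (by omega)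
  have hrW : finrank ℝ W = finrank ℝ L := by rw [hWtop]; exact finrank_top ℝ L
  -- finrank aJ
  have hr_aJ : finrank ℝ aJ + 4 = finrank ℝ L := by
    have h := Submodule.finrank_sup_add_finrank_inf_eq A (A.map J)
    rw [← hW, hrW, hmapJ_rank, ← haJ] at h
    omega
  -- W' = A ⊔ J a' is all of L
  have hAlea' : A ≤ a' := le_of_lt hAlt
  have hW'top : A ⊔ a'.map J = ⊤ := by
    rw [← top_le_iff, ← hWtop, hW]
    exact sup_le_sup_left (Submodule.map_mono hAlea') A
  have hr_bb : finrank ℝ bb + 3 = finrank ℝ L := by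
    have h := Submodule.finrank_sup_add_finrank_inf_eq A (a'.map J)
    rw [hW'top, hmapJ_rank, ← hbb, hr_a', finrank_top] at h
    omega
  -- strict inclusions
  have hlt1 : aJ < bb := by
    refine lt_of_le_of_ne ?_ ?_
    · rw [haJ, hbb]
      exact inf_le_inf_left A (Submodule.map_mono hAlea')
    · intro h
      rw [h] at hr_aJ
      omega
  have hlt2 : bb < A := by
    refine lt_of_le_of_ne (hbb ▸ inf_le_left) ?_
    intro h
    rw [h] at hr_bb
    omega
  have hlt4 : a' < ⊤ := by
    refine lt_of_le_of_ne le_top ?_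
    intro h
    rw [h, finrank_top] at hr_a'
    omega
  refine ⟨?_, ⟨by omega, hr_aJ⟩, ⟨hlt1, hlt2, hAlt, hlt4⟩, ?_, ?_⟩
  · -- aJ is an ideal
    intro z u hu
    rw [haJ] at hu ⊢
    obtain ⟨hu1, hu2⟩ := hu
    have hJu : J u ∈ A := (hmemJ A u).1 hu2
    have hzW : z ∈ W := hWtop ▸ Submodule.mem_top
    rw [hW, Submodule.mem_sup] at hzW
    obtain ⟨v, hv, jw, hjw, rfl⟩ := hzW
    obtain ⟨w, hw, rfl⟩ := hjw
    have hbr1 : ⁅v + J w, u⁆ = ⁅J w, u⁆ := by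
      rw [add_lie, habel v hv u hu1, zero_add]
    have hintwu := hint w u
    rw [habel w hw u hu1, habel w hw (J u) hJu, map_zero, add_zero, zero_sub] at hintwu
    -- hintwu : -⁅J w, J u⁆ + J ⁅J w, u⁆ = 0
    have hJbr : J ⁅J w, u⁆ = ⁅J w, J u⁆ := by linear_combination (norm := module) hintwu
    refine ⟨hbr1 ▸ hlie _ _ hu1, ?_⟩
    rw [hbr1]
    exact (hmemJ A _).2 (by rw [hJbr]; exact hlie _ _ hJu)
  · -- x ∈ bb \ aJ
    intro x' hx' hnx'
    rw [hbb] at hx'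
    obtain ⟨h1, h2⟩ := hx'
    refine ⟨(hmemJ a' x').1 h2, ?_⟩
    intro hJx'
    exact hnx' (haJ ▸ ⟨h1, (hmemJ A x').2 hJx'⟩)
  · -- y ∈ a \ bb
    intro y' hy' hny' hJy'
    exact hny' (hbb ▸ ⟨hy', (hmemJ a' y').2 hJy'⟩)
end

section
/- Let g be a finite-dimensional real Lie algebra containing an abelian ideal a of codimension 2, and J a complex structure on g with J(a) ≠ a and [g,g] ⊄ a. Let x ∈ 𝔟 \ a_J and y ∈ a be such that a = a_J ⊕ ℝx ⊕ ℝy, and let c, d be the unique reals with [Jx,y] − (cx+dy) ∈ a_J. Then there is a unique real number σ with [Jx,Jy] − σ·Jx ∈ a_J; moreover σ ≠ 0, and [Jy,x] − ((c−σ)x + dy) ∈ a_J. -/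
open Module

theorem stmt5
    {L : Type*} [LieRing L] [LieAlgebra ℝ L] [FiniteDimensional ℝ L]
    (a : LieIdeal ℝ L)
    (habel : ∀ u ∈ a.toSubmodule, ∀ v ∈ a.toSubmodule, ⁅u, v⁆ = (0 : L))
    (hcodim : finrank ℝ ↥a.toSubmodule + 2 = finrank ℝ L)
    (J : L →ₗ[ℝ] L) (hJ : IsComplexStructure J)
    (hJa : a.toSubmodule.map J ≠ a.toSubmodule)
    (hnonab : ¬ ∀ u v : L, ⁅u, v⁆ ∈ a.toSubmodule)
    (aJ a' bb : Submodule ℝ L)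
    (haJ : aJ = a.toSubmodule ⊓ a.toSubmodule.map J)
    (ha' : a' = a.toSubmodule ⊔ Submodule.span ℝ {z : L | ∃ u v : L, ⁅u, v⁆ = z})
    (hbb : bb = a.toSubmodule ⊓ a'.map J)
    (x y : L) (hxb : x ∈ bb) (hxnot : x ∉ aJ) (hy : y ∈ a.toSubmodule)
    (hspanx : a.toSubmodule = aJ ⊔ Submodule.span ℝ {x} ⊔ Submodule.span ℝ {y})
    (hindepx : ∀ (s t : ℝ) (u : L), u ∈ aJ → s • x + t • y + u = 0 → s = 0 ∧ t = 0)
    (c d : ℝ) (hcd : ⁅J x, y⁆ - (c • x + d • y) ∈ aJ) :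
    (∃! σ : ℝ, ⁅J x, J y⁆ - σ • J x ∈ aJ) ∧
    (∀ σ : ℝ, ⁅J x, J y⁆ - σ • J x ∈ aJ →
      σ ≠ 0 ∧ ⁅J y, x⁆ - ((c - σ) • x + d • y) ∈ aJ) := by
  unfold IsComplexStructure at hJ
  obtain ⟨hJ2, hint⟩ := hJ
  have skew : ∀ p q : L, ⁅p, q⁆ = -⁅q, p⁆ := fun p q => (lie_skew p q).symm
  -- basic membership facts
  have hxa : x ∈ a.toSubmodule := by rw [hbb] at hxb; exact hxb.1
  -- aJ ⊆ a
  have haJa : aJ ≤ a.toSubmodule := by rw [haJ]; exact inf_le_left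
  -- p ∈ a ∧ J p ∈ a → p ∈ aJ
  have mem_aJ : ∀ p : L, p ∈ a.toSubmodule → J p ∈ a.toSubmodule → p ∈ aJ := by
    intro p hp hJp
    rw [haJ]
    refine ⟨hp, ⟨-(J p), neg_mem hJp, ?_⟩⟩
    rw [map_neg, hJ2, neg_neg]
  -- J(aJ) ⊆ aJ
  have JaJ : ∀ p : L, p ∈ aJ → J p ∈ aJ := by
    intro p hp
    rw [haJ] at hp
    obtain ⟨hp1, w, hw, hwp⟩ := hp
    have hJpa : J p ∈ a.toSubmodule := by
      rw [← hwp, hJ2]; exact neg_mem hw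
    exact mem_aJ _ hJpa (by rw [hJ2]; exact neg_mem hp1)
  -- Jx ∉ a
  have hJxa : J x ∉ a.toSubmodule := by
    intro h
    exact hxnot (mem_aJ x hxa h)
  -- Jy ∉ a
  have hJya : J y ∉ a.toSubmodule := by
    intro h
    have hyaJ : y ∈ aJ := mem_aJ y hy h
    have := (hindepx 0 1 (-y) (neg_mem hyaJ) (by simp)).2
    norm_num at this
  -- Jy ∉ a ⊔ span Jx
  set p1 : Submodule ℝ L := a.toSubmodule ⊔ Submodule.span ℝ {J x} with hp1def
  have hJyp1 : J y ∉ p1 := by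
    intro h
    rw [hp1def, Submodule.mem_sup] at h
    obtain ⟨w, hw, z, hz, hwz⟩ := h
    rw [Submodule.mem_span_singleton] at hz
    obtain ⟨s, rfl⟩ := hz
    -- J y = w + s • J x ; apply J : -y = Jw - s • x, so Jw = s • x - y
    have hJw : J w = s • x - y := by
      have := congrArg J hwz
      rw [map_add, map_smul, hJ2, hJ2] at this
      have : J w + s • (-x) = -y := this
      linear_combination (norm := module) this
    have hwaJ : w ∈ aJ := mem_aJ w hw (by rw [hJw]; exact sub_mem (Submodule.smul_mem _ _ hxa) hy)
    have hJwaJ : J w ∈ aJ := JaJ w hwaJ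
    have : s • x + (-1 : ℝ) • y + (-(J w)) = 0 := by
      rw [hJw]; module
    exact absurd (hindepx s (-1) _ (neg_mem hJwaJ) this).2 (by norm_num)
  -- g = a ⊔ span Jx ⊔ span Jy
  set p2 : Submodule ℝ L := p1 ⊔ Submodule.span ℝ {J y} with hp2def
  have hp1lt : a.toSubmodule < p1 := by
    refine lt_of_le_of_ne le_sup_left (fun h => hJxa ?_)
    rw [h]
    exact Submodule.mem_sup_right (Submodule.mem_span_singleton_self (J x))
  have hp2lt : p1 < p2 := by
    refine lt_of_le_of_ne le_sup_left (fun h => hJyp1 ?_)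
    rw [h]
    exact Submodule.mem_sup_right (Submodule.mem_span_singleton_self (J y))
  have hp2top : p2 = ⊤ := by
    apply Submodule.eq_top_of_finrank_eq
    have h1 := Submodule.finrank_lt_finrank_of_lt hp1lt
    have h2 := Submodule.finrank_lt_finrank_of_lt hp2lt
    have h3 := Submodule.finrank_le p2
    omega
  -- decomposition of any element of L
  have decomp : ∀ z : L, ∃ u ∈ a.toSubmodule, ∃ s t : ℝ, z = u + s • J x + t • J y := by
    intro z
    have hz : z ∈ p2 := hp2top ▸ Submodule.mem_top
    rw [hp2def, Submodule.mem_sup] at hz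
    obtain ⟨w1, hw1, z2, hz2, hzz⟩ := hz
    rw [hp1def, Submodule.mem_sup] at hw1
    obtain ⟨u, hu, z1, hz1, huz⟩ := hw1
    rw [Submodule.mem_span_singleton] at hz1 hz2
    obtain ⟨s, rfl⟩ := hz1
    obtain ⟨t, rfl⟩ := hz2
    exact ⟨u, hu, s, t, by rw [← hzz, ← huz]⟩
  -- uniqueness of coefficients
  have uniq : ∀ u ∈ a.toSubmodule, ∀ s t : ℝ, u + s • J x + t • J y = 0 → s = 0 ∧ t = 0 ∧ u = 0 := by
    intro u hu s t h
    have ht : t = 0 := by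
      by_contra ht
      apply hJyp1
      have : J y = (-t⁻¹) • u + (-t⁻¹ * s) • J x := by
        have h' : t • J y = -u - s • J x := by linear_combination (norm := module) h
        have := congrArg (fun z => t⁻¹ • z) h'
        simp only [smul_smul, inv_mul_cancel₀ ht, one_smul] at this
        rw [this]; module
      rw [this, hp1def]
      exact add_mem (Submodule.mem_sup_left (Submodule.smul_mem _ _ hu))
        (Submodule.mem_sup_right (Submodule.smul_mem _ _ (Submodule.mem_span_singleton_self _)))
    subst ht
    have hs : s = 0 := by
      by_contra hs
      apply hJxa
      have : J x = (-s⁻¹) • u := by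
        have h' : s • J x = -u := by linear_combination (norm := module) h
        have := congrArg (fun z => s⁻¹ • z) h'
        simp only [smul_smul, inv_mul_cancel₀ hs, one_smul] at this
        rw [this]; module
      rw [this]
      exact Submodule.smul_mem _ _ hu
    subst hs
    simp at h
    exact ⟨rfl, rfl, h⟩
  -- every bracket lies in a ⊔ span [Jx,Jy]
  set q1 : Submodule ℝ L := a.toSubmodule ⊔ Submodule.span ℝ {⁅J x, J y⁆} with hq1def
  have brkt : ∀ u v : L, ⁅u, v⁆ ∈ q1 := by
    intro u v
    obtain ⟨u₀, hu₀, s, t, rfl⟩ := decomp u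
    obtain ⟨v₀, hv₀, s', t', rfl⟩ := decomp v
    have E : ⁅u₀ + s • J x + t • J y, v₀ + s' • J x + t' • J y⁆ =
        (s * t' - t * s') • ⁅J x, J y⁆ +
        (s • ⁅J x, v₀⁆ + t • ⁅J y, v₀⁆ - s' • ⁅J x, u₀⁆ - t' • ⁅J y, u₀⁆) := by
      simp only [add_lie, lie_add, smul_lie, lie_smul, lie_self, habel u₀ hu₀ v₀ hv₀,
        smul_zero, zero_add, add_zero]
      rw [skew u₀ (J x), skew u₀ (J y), skew (J y) (J x)]
      module
    rw [E]
    refine add_mem (Submodule.mem_sup_right (Submodule.smul_mem _ _ (Submodule.mem_span_singleton_self _))) (Submodule.mem_sup_left ?_)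
    exact sub_mem (sub_mem (add_mem (Submodule.smul_mem _ _ (a.lie_mem hv₀))
      (Submodule.smul_mem _ _ (a.lie_mem hv₀)))
      (Submodule.smul_mem _ _ (a.lie_mem hu₀))) (Submodule.smul_mem _ _ (a.lie_mem hu₀))
  have ha'le : a' ≤ q1 := by
    rw [ha']
    refine sup_le le_sup_left (Submodule.span_le.mpr ?_)
    rintro z ⟨u, v, rfl⟩
    exact brkt u v
  -- [Jx,Jy] ∉ a
  have hbr : ⁅J x, J y⁆ ∉ a.toSubmodule := by
    intro h
    apply hnonab
    intro u v
    have := brkt u v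
    rw [hq1def, Submodule.mem_sup] at this
    obtain ⟨w, hw, z, hz, hwz⟩ := this
    rw [Submodule.mem_span_singleton] at hz
    obtain ⟨μ, rfl⟩ := hz
    rw [← hwz]
    exact add_mem hw (Submodule.smul_mem _ _ h)
  -- Jx ∈ a'
  have hJxa' : J x ∈ a' := by
    rw [hbb] at hxb
    obtain ⟨w, hw, hwx⟩ := hxb.2
    have : J x = -w := by rw [← hwx, hJ2]
    rw [this]
    exact neg_mem hw
  -- get σ ≠ 0 and v ∈ a with [Jx,Jy] = σ Jx + v
  have hJxq1 : J x ∈ q1 := ha'le hJxa'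
  rw [hq1def, Submodule.mem_sup] at hJxq1
  obtain ⟨w, hw, z, hz, hwz⟩ := hJxq1
  rw [Submodule.mem_span_singleton] at hz
  obtain ⟨lam, rfl⟩ := hz
  have hlam : lam ≠ 0 := by
    rintro rfl
    simp at hwz
    exact hJxa (hwz ▸ hw)
  set σ₀ : ℝ := lam⁻¹ with hσ₀
  have hbrdec : ⁅J x, J y⁆ = σ₀ • J x + (-σ₀) • w := by
    have := congrArg (fun z => lam⁻¹ • z) hwz
    simp only [smul_add, smul_smul, inv_mul_cancel₀ hlam, one_smul] at this
    rw [← this]; module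
  have hσ₀ne : σ₀ ≠ 0 := inv_ne_zero hlam
  -- decompose [Jy, x] ∈ a
  have hJyx : ⁅J y, x⁆ ∈ a.toSubmodule := a.lie_mem hxa
  have hJyxdec : ∃ q ∈ aJ, ∃ e f : ℝ, ⁅J y, x⁆ = q + e • x + f • y := by
    rw [hspanx, Submodule.mem_sup] at hJyx
    obtain ⟨w1, hw1, z2, hz2, hzz⟩ := hJyx
    rw [Submodule.mem_sup] at hw1
    obtain ⟨q, hq, z1, hz1, hqz⟩ := hw1
    rw [Submodule.mem_span_singleton] at hz1 hz2
    obtain ⟨e, rfl⟩ := hz1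
    obtain ⟨f, rfl⟩ := hz2
    exact ⟨q, hq, e, f, by rw [← hzz, ← hqz]⟩
  obtain ⟨q, hq, e, f, hef⟩ := hJyxdec
  set p : L := ⁅J x, y⁆ - (c • x + d • y) with hpdef
  have hpaJ : p ∈ aJ := hcd
  have hbry : ⁅J x, y⁆ = c • x + d • y + p := by rw [hpdef]; module
  -- integrability at (x, y)
  have hxy0 : ⁅x, y⁆ = 0 := habel x hxa y hy
  have hint' : ⁅J x, J y⁆ = J ⁅J x, y⁆ - J ⁅J y, x⁆ := by
    have h0 := hint x y
    rw [hxy0, skew x (J y), map_neg] at h0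
    linear_combination (norm := module) -h0
  have hmain : ⁅J x, J y⁆ = (c - e) • J x + (d - f) • J y + (J p - J q) := by
    rw [hint', hbry, hef]
    simp only [map_add, map_smul, map_sub]
    module
  -- compare with hbrdec using uniqueness
  have hcomp : ((-σ₀) • w - (J p - J q)) + (σ₀ - (c - e)) • J x + (-(d - f)) • J y = 0 := by
    have := hbrdec.symm.trans hmain
    linear_combination (norm := module) this
  have hJpa : J p ∈ aJ := JaJ p hpaJ
  have hJqa : J q ∈ aJ := JaJ q hq
  have hmem : (-σ₀) • w - (J p - J q) ∈ a.toSubmodule :=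
    sub_mem (Submodule.smul_mem _ _ hw) (sub_mem (haJa hJpa) (haJa hJqa))
  obtain ⟨hc1, hc2, hc3⟩ := uniq _ hmem _ _ hcomp
  have hσ : σ₀ = c - e := by linarith [sub_eq_zero.mp (by linarith : σ₀ - (c - e) = 0)]
  have hdf : d = f := by
    have : d - f = 0 := by linarith [neg_eq_zero.mp hc2]
    linarith
  have hvaJ : (-σ₀) • w ∈ aJ := by
    have : (-σ₀) • w = J p - J q := by linear_combination (norm := module) hc3
    rw [this]
    exact sub_mem hJpa hJqa
  -- the main existence statement
  have hexist : ⁅J x, J y⁆ - σ₀ • J x ∈ aJ := by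
    have : ⁅J x, J y⁆ - σ₀ • J x = (-σ₀) • w := by rw [hbrdec]; module
    rw [this]; exact hvaJ
  -- uniqueness of σ
  have huniqσ : ∀ σ : ℝ, ⁅J x, J y⁆ - σ • J x ∈ aJ → σ = σ₀ := by
    intro σ hσ'
    by_contra hne
    have hdiff : (σ₀ - σ) • J x ∈ aJ := by
      have : (σ₀ - σ) • J x = (⁅J x, J y⁆ - σ • J x) - (⁅J x, J y⁆ - σ₀ • J x) := by module
      rw [this]
      exact sub_mem hσ' hexist
    have h1 : (σ₀ - σ) • J x ∈ a.toSubmodule := haJa hdiff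
    have h2 : σ₀ - σ ≠ 0 := sub_ne_zero.mpr (Ne.symm hne)
    apply hJxa
    have : J x = (σ₀ - σ)⁻¹ • ((σ₀ - σ) • J x) := by
      rw [smul_smul, inv_mul_cancel₀ h2, one_smul]
    rw [this]
    exact Submodule.smul_mem _ _ h1
  constructor
  · exact ⟨σ₀, hexist, huniqσ⟩
  · intro σ hσ'
    have hσσ₀ := huniqσ σ hσ'
    subst hσσ₀
    refine ⟨hσ₀ne, ?_⟩
    have hce : c - σ₀ = e := by linarith
    have : ⁅J y, x⁆ - ((c - σ₀) • x + d • y) = q := by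
      rw [hef, hce, hdf]; module
    rw [this]
    exact hq
end

section
/- Let g be a finite-dimensional real Lie algebra containing an abelian ideal a of codimension 2, and J a complex structure on g with J(a) ≠ a and [g,g] ⊄ a. Then a_J := a ∩ J(a) is an ideal of g, and for every x ∈ 𝔟 := a ∩ J(a + [g,g]), the endomorphism of a/a_J induced by ad(Jx) (well defined since [Jx,a] ⊆ a and [Jx,a_J] ⊆ a_J) is nilpotent. Equivalently, for x ∈ 𝔟 \ a_J and y ∈ a with a = a_J ⊕ ℝx ⊕ ℝy, the unique reals a, b, c, d with [Jx,x] − (ax+by) ∈ a_J and [Jx,y] − (cx+dy) ∈ a_J satisfy d = −a and a² + bc = 0. -/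
open Module

/-!
The subspace `a ⊔ J a` is `J`-invariant and strictly contains `a`, so it is even-dimensional and
hence all of `g`. Consequently `g = a + ℝ Jx + ℝ Jy`, `[g, g] ⊆ a + ℝ [Jx, Jy]`, and integrability
makes `a_J` an ideal. Writing `[Jx, Jy] = w + α Jx + β Jy` with `w ∈ a`, the condition
`x ∈ J (a + [g, g])` forces `β = 0` and `α ≠ 0`. Since `a` is abelian, the Jacobi identity gives
`[ad Jx, ad Jy] = α ad Jx` on `a / a_J`, which makes `ad Jx` nilpotent there.
-/

section ComplexStructure

variable {K V : Type*} [Field K] [AddCommGroup V] [Module K V] {J : V →ₗ[K] V}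

theorem mem_map_iff_apply_mem (hJ : ∀ v, J (J v) = -v) {p : Submodule K V} {v : V} :
    v ∈ p.map J ↔ J v ∈ p := by
  refine ⟨?_, fun h => ⟨-J v, neg_mem h, by rw [map_neg, hJ, neg_neg]⟩⟩
  rintro ⟨w, hw, rfl⟩
  simpa [hJ] using hw

theorem map_map_eq_self (hJ : ∀ v, J (J v) = -v) (p : Submodule K V) : (p.map J).map J = p := by
  ext v
  rw [mem_map_iff_apply_mem hJ, mem_map_iff_apply_mem hJ, hJ, neg_mem_iff]

theorem even_finrank_of_apply_apply_eq_neg [LinearOrder K] [IsStrictOrderedRing K]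
    (hJ : ∀ v, J (J v) = -v) : Even (finrank K V) := by
  by_contra hodd
  have hJJ : J ∘ₗ J = (-1 : K) • LinearMap.id := by ext v; simp [hJ]
  have hdet : LinearMap.det J * LinearMap.det J = -1 := by
    rw [← LinearMap.det_comp, hJJ, LinearMap.det_smul, LinearMap.det_id, mul_one,
      (Nat.not_even_iff_odd.mp hodd).neg_one_pow]
  nlinarith [mul_self_nonneg (LinearMap.det J)]

theorem sup_map_eq_top_of_finrank_add_two [LinearOrder K] [IsStrictOrderedRing K]
    [FiniteDimensional K V] (hJ : ∀ v, J (J v) = -v) {a : Submodule K V}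
    (hcodim : finrank K a + 2 = finrank K V) (hJa : a.map J ≠ a) : a ⊔ a.map J = ⊤ := by
  set W := a ⊔ a.map J
  have hJW : ∀ v ∈ W, J v ∈ W := fun v hv => by
    rwa [← mem_map_iff_apply_mem hJ, Submodule.map_sup, map_map_eq_self hJ, sup_comm]
  have hW : Even (finrank K W) :=
    even_finrank_of_apply_apply_eq_neg (J := J.restrict hJW) fun v => Subtype.ext (hJ v)
  have hV : Even (finrank K V) := even_finrank_of_apply_apply_eq_neg hJ
  have hlt : a < W := left_lt_sup.mpr fun hle => hJa <| le_antisymm hle <| by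
    simpa only [map_map_eq_self hJ] using Submodule.map_mono (f := J) hle
  have := Submodule.finrank_lt_finrank_of_lt hlt
  have := Submodule.finrank_le W
  refine Submodule.eq_top_of_finrank_eq ?_
  obtain ⟨k, hk⟩ := hW
  obtain ⟨m, hm⟩ := hV
  omega

theorem sup_span_pair_apply_eq_top (hJ : ∀ v, J (J v) = -v) {a : Submodule K V}
    (htop : a ⊔ a.map J = ⊤) {x y : V} (hdecomp : a = a ⊓ a.map J ⊔ K ∙ x ⊔ K ∙ y) :
    a ⊔ Submodule.span K {J x, J y} = ⊤ := by
  rw [eq_top_iff, ← htop]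
  refine sup_le le_sup_left ?_
  have hJaJ : (a ⊓ a.map J).map J ≤ a :=
    (Submodule.map_mono inf_le_right).trans (map_map_eq_self hJ a).le
  calc a.map J = ((a ⊓ a.map J ⊔ K ∙ x) ⊔ K ∙ y).map J := by rw [← hdecomp]
    _ = ((a ⊓ a.map J).map J ⊔ K ∙ J x) ⊔ K ∙ J y := by
      rw [Submodule.map_sup, Submodule.map_sup, Submodule.map_span, Submodule.map_span,
        Set.image_singleton, Set.image_singleton]
    _ ≤ a ⊔ Submodule.span K {J x, J y} := by
      rw [Submodule.span_insert]
      exact sup_le (sup_le (hJaJ.trans le_sup_left) (le_sup_left.trans le_sup_right))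
        (le_sup_right.trans le_sup_right)

theorem exists_eq_add_smul_of_apply_mem_sup_span (hJ : ∀ v, J (J v) = -v) {a : Submodule K V}
    {x y c : V} (hxy : ∀ s t : K, s • x + t • y ∈ a ⊓ a.map J → s = 0 ∧ t = 0)
    (hx : x ∈ a) (hy : y ∈ a) (hspan : a ⊔ Submodule.span K {J x, J y} = ⊤)
    (hJx : J x ∈ a ⊔ K ∙ c) :
    ∃ w ∈ a, ∃ α ≠ (0 : K), c = w + α • J x := by
  have hc : c ∈ a ⊔ Submodule.span K {J x, J y} := by rw [hspan]; exact Submodule.mem_top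
  obtain ⟨w, hw, _, hαβ, rfl⟩ := Submodule.mem_sup.mp hc
  obtain ⟨α, β, rfl⟩ := Submodule.mem_span_pair.mp hαβ
  obtain ⟨u, hu, _, htc, hJx⟩ := Submodule.mem_sup.mp hJx
  obtain ⟨t, rfl⟩ := Submodule.mem_span_singleton.mp htc
  have heq : (t * α - 1) • x + (t * β) • y = J (u + t • w) := by
    have h := congrArg J hJx
    simp only [map_add, map_smul, hJ] at h
    rw [map_add, map_smul]
    linear_combination (norm := module) -h
  obtain ⟨h₁, h₂⟩ := hxy _ _ ⟨add_mem (a.smul_mem _ hx) (a.smul_mem _ hy),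
    heq ▸ Submodule.mem_map_of_mem (add_mem hu (a.smul_mem _ hw))⟩
  have ht : t ≠ 0 := by rintro rfl; simp at h₁
  refine ⟨w, hw, α, by rintro rfl; simp at h₁, ?_⟩
  rw [(mul_eq_zero.mp h₂).resolve_left ht, zero_smul, add_zero]

end ComplexStructure

theorem Submodule.Quotient.mk_mem_span_pair {R M : Type*} [Ring R] [AddCommGroup M] [Module R M]
    {N : Submodule R M} {x y w : M} (hw : w ∈ N ⊔ R ∙ x ⊔ R ∙ y) :
    (Submodule.Quotient.mk w : M ⧸ N) ∈
      Submodule.span R {Submodule.Quotient.mk x, Submodule.Quotient.mk y} := by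
  obtain ⟨_, hnx, _, hty, rfl⟩ := Submodule.mem_sup.mp hw
  obtain ⟨n, hn, _, hsx, rfl⟩ := Submodule.mem_sup.mp hnx
  obtain ⟨s, rfl⟩ := Submodule.mem_span_singleton.mp hsx
  obtain ⟨t, rfl⟩ := Submodule.mem_span_singleton.mp hty
  exact Submodule.mem_span_pair.mpr ⟨s, t, by simp [(Submodule.Quotient.mk_eq_zero N).mpr hn]⟩

theorem lie_mem_sup_span_lie {R L : Type*} [CommRing R] [LieRing L] [LieAlgebra R L]
    (a : LieIdeal R L) {e f : L} (h : a.toSubmodule ⊔ Submodule.span R {e, f} = ⊤) (u v : L) :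
    ⁅u, v⁆ ∈ a.toSubmodule ⊔ R ∙ ⁅e, f⁆ := by
  have hdec (z : L) : ∃ z₀ ∈ a, ∃ s t : R, z = z₀ + (s • e + t • f) := by
    have hz : z ∈ a.toSubmodule ⊔ Submodule.span R {e, f} := by rw [h]; exact Submodule.mem_top
    obtain ⟨z₀, hz₀, _, hw, rfl⟩ := Submodule.mem_sup.mp hz
    obtain ⟨s, t, rfl⟩ := Submodule.mem_span_pair.mp hw
    exact ⟨z₀, hz₀, s, t, rfl⟩
  obtain ⟨u₀, hu₀, s, t, rfl⟩ := hdec u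
  obtain ⟨v₀, hv₀, s', t', rfl⟩ := hdec v
  have hexp : ⁅u₀ + (s • e + t • f), v₀ + (s' • e + t' • f)⁆ =
      (⁅u₀, v₀ + (s' • e + t' • f)⁆ + ⁅s • e + t • f, v₀⁆) + (s * t' - t * s') • ⁅e, f⁆ := by
    simp only [add_lie, lie_add, smul_lie, lie_smul, lie_self, ← lie_skew f e]
    module
  rw [hexp]
  exact add_mem
    (Submodule.mem_sup_left (add_mem (lie_mem_left R L a _ _ hu₀) (lie_mem_right R L a _ _ hv₀)))
    (Submodule.mem_sup_right (Submodule.smul_mem _ _ (Submodule.mem_span_singleton_self _)))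

section Nilpotent

variable {K L : Type*} [Field K] [NeZero (2 : K)] [LieRing L] [LieAlgebra K L]

theorem eq_neg_and_sq_add_mul_eq_zero_of_lie_lie_eq_smul {X Y P R : L}
    (hXY : LinearIndependent K ![X, Y]) {α a b c d : K} (hα : α ≠ 0)
    (hPX : ⁅P, X⁆ = a • X + b • Y) (hPY : ⁅P, Y⁆ = c • X + d • Y)
    (hRX : ⁅R, X⁆ ∈ Submodule.span K {X, Y}) (hRY : ⁅R, Y⁆ ∈ Submodule.span K {X, Y})
    (hPRX : ⁅⁅P, R⁆, X⁆ = α • ⁅P, X⁆) (hPRY : ⁅⁅P, R⁆, Y⁆ = α • ⁅P, Y⁆) :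
    d = -a ∧ a ^ 2 + b * c = 0 := by
  obtain ⟨p, q, hRX⟩ := Submodule.mem_span_pair.mp hRX
  obtain ⟨r, s, hRY⟩ := Submodule.mem_span_pair.mp hRY
  rw [lie_lie, ← hRX, hPX] at hPRX
  rw [lie_lie, ← hRY, hPY] at hPRY
  simp only [lie_add, lie_smul, hPX, hPY, ← hRX, ← hRY] at hPRX hPRY
  obtain ⟨h₁, h₂⟩ := LinearIndependent.pair_iff.mp hXY (q * c - b * r - α * a)
    (p * b + q * d - a * q - b * s - α * b) (by linear_combination (norm := module) hPRX)
  obtain ⟨h₃, h₄⟩ := LinearIndependent.pair_iff.mp hXY (r * a + s * c - c * p - d * r - α * c)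
    (r * b - c * q - α * d) (by linear_combination (norm := module) hPRY)
  -- `A := ad P` and `B := ad R` on `span {X, Y}` satisfy `[A, B] = α A`; the two identities
  -- below are `α tr A = tr [A, B] = 0` and `α tr A² = tr ([A, B] A) = 0`.
  have hd : d = -a := by
    apply mul_left_cancel₀ hα
    linear_combination -h₁ - h₄
  refine ⟨hd, mul_left_cancel₀ (mul_ne_zero two_ne_zero hα) ?_⟩
  subst hd
  linear_combination (-a) * h₁ - b * h₃ - c * h₂ + a * h₄

theorem LieIdeal.eq_neg_and_sq_add_mul_eq_zero_of_lie_lie_eq_smul (I : LieIdeal K L)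
    {x y P R : L} (hxy : ∀ s t : K, s • x + t • y ∈ I → s = 0 ∧ t = 0) {α a b c d : K}
    (hα : α ≠ 0) (hPx : ⁅P, x⁆ - (a • x + b • y) ∈ I) (hPy : ⁅P, y⁆ - (c • x + d • y) ∈ I)
    (hR : ∀ z ∈ I.toSubmodule ⊔ K ∙ x ⊔ K ∙ y, ⁅R, z⁆ ∈ I.toSubmodule ⊔ K ∙ x ⊔ K ∙ y)
    (hPRx : ⁅⁅P, R⁆, x⁆ = α • ⁅P, x⁆) (hPRy : ⁅⁅P, R⁆, y⁆ = α • ⁅P, y⁆) :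
    d = -a ∧ a ^ 2 + b * c = 0 := by
  let π : L → L ⧸ I := LieSubmodule.Quotient.mk
  have hXY : LinearIndependent K ![π x, π y] := by
    refine LinearIndependent.pair_iff.mpr fun s t hst => hxy s t ?_
    refine (Submodule.Quotient.mk_eq_zero _).mp ?_
    simpa using hst
  have hmem {z : L} (hz : z ∈ I.toSubmodule ⊔ K ∙ x ⊔ K ∙ y) : π z ∈ Submodule.span K {π x, π y} :=
    Submodule.Quotient.mk_mem_span_pair hz
  refine _root_.eq_neg_and_sq_add_mul_eq_zero_of_lie_lie_eq_smul (P := π P) (R := π R) hXY hα ?_ ?_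
    (hmem (hR x (Submodule.mem_sup_left (Submodule.mem_sup_right
      (Submodule.mem_span_singleton_self x)))))
    (hmem (hR y (Submodule.mem_sup_right (Submodule.mem_span_singleton_self y)))) ?_ ?_
  · simpa [π] using (Submodule.Quotient.eq _).mpr hPx
  · simpa [π] using (Submodule.Quotient.eq _).mpr hPy
  · simpa [π] using congrArg π hPRx
  · simpa [π] using congrArg π hPRy

end Nilpotent

section LieComplexStructure

variable {L : Type*} [LieRing L] [LieAlgebra ℝ L] {J : L →ₗ[ℝ] L}

theorem IsComplexStructure.lie_apply_apply_of_lie_eq_zero (hJ : IsComplexStructure J)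
    {u v : L} (huv : ⁅u, v⁆ = 0) : ⁅J u, J v⁆ = J ⁅J u, v⁆ + J ⁅u, J v⁆ := by
  linear_combination (norm := module) huv - hJ.2 u v

theorem IsComplexStructure.lie_mem_inf_map (hJ : IsComplexStructure J) (a : LieIdeal ℝ L)
    (habel : ∀ u ∈ a.toSubmodule, ∀ v ∈ a.toSubmodule, ⁅u, v⁆ = (0 : L))
    (htop : a.toSubmodule ⊔ a.toSubmodule.map J = ⊤) (z : L) {u : L}
    (hu : u ∈ a.toSubmodule ⊓ a.toSubmodule.map J) :
    ⁅z, u⁆ ∈ a.toSubmodule ⊓ a.toSubmodule.map J := by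
  rw [Submodule.mem_inf, mem_map_iff_apply_mem hJ.1] at hu
  obtain ⟨hua, hJu⟩ := hu
  have hz : z ∈ a.toSubmodule ⊔ a.toSubmodule.map J := by rw [htop]; exact Submodule.mem_top
  obtain ⟨p, hp, _, ⟨q, hq, rfl⟩, rfl⟩ := Submodule.mem_sup.mp hz
  have hJlie : J ⁅J q, u⁆ = ⁅J q, J u⁆ := by
    rw [hJ.lie_apply_apply_of_lie_eq_zero (habel q hq u hua), habel q hq _ hJu, map_zero, add_zero]
  rw [add_lie, habel p hp u hua, zero_add, Submodule.mem_inf, mem_map_iff_apply_mem hJ.1, hJlie]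
  exact ⟨a.lie_mem hua, a.lie_mem hJu⟩

end LieComplexStructure

theorem stmt6_general
    {L : Type*} [LieRing L] [LieAlgebra ℝ L] [FiniteDimensional ℝ L]
    (a : LieIdeal ℝ L)
    (habel : ∀ u ∈ a.toSubmodule, ∀ v ∈ a.toSubmodule, ⁅u, v⁆ = (0 : L))
    (hcodim : finrank ℝ ↥a.toSubmodule + 2 = finrank ℝ L)
    (J : L →ₗ[ℝ] L) (hJ : IsComplexStructure J)
    (hJa : a.toSubmodule.map J ≠ a.toSubmodule)
    (aJ a' bb : Submodule ℝ L)
    (haJ : aJ = a.toSubmodule ⊓ a.toSubmodule.map J)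
    (ha' : a' = a.toSubmodule ⊔ Submodule.span ℝ {z : L | ∃ u v : L, ⁅u, v⁆ = z})
    (hbb : bb = a.toSubmodule ⊓ a'.map J)
    :
    (∀ z : L, ∀ u ∈ aJ, ⁅z, u⁆ ∈ aJ) ∧
    (∀ x y : L, x ∈ bb → x ∉ aJ → y ∈ a.toSubmodule →
      a.toSubmodule = aJ ⊔ Submodule.span ℝ {x} ⊔ Submodule.span ℝ {y} →
      (∀ (s t : ℝ) (u : L), u ∈ aJ → s • x + t • y + u = 0 → s = 0 ∧ t = 0) →
      ∀ a₀ b₀ c₀ d₀ : ℝ,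
        ⁅J x, x⁆ - (a₀ • x + b₀ • y) ∈ aJ →
        ⁅J x, y⁆ - (c₀ • x + d₀ • y) ∈ aJ →
        d₀ = -a₀ ∧ a₀ ^ 2 + b₀ * c₀ = 0) := by
  subst haJ ha' hbb
  have htop := sup_map_eq_top_of_finrank_add_two hJ.1 hcodim hJa
  let I : LieIdeal ℝ L :=
    { toSubmodule := a.toSubmodule ⊓ a.toSubmodule.map J
      lie_mem := fun hu => hJ.lie_mem_inf_map a habel htop _ hu }
  refine ⟨fun z u hu => I.lie_mem hu, ?_⟩
  intro x y ⟨hx, hJx⟩ _ hy hdecomp hindep a₀ b₀ c₀ d₀ h₀ h₁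
  have hxy (s t : ℝ) (h : s • x + t • y ∈ I) : s = 0 ∧ t = 0 :=
    hindep s t _ (neg_mem h) (add_neg_cancel _)
  have hspan := sup_span_pair_apply_eq_top hJ.1 htop hdecomp
  have hderived : Submodule.span ℝ {z : L | ∃ u v : L, ⁅u, v⁆ = z} ≤
      a.toSubmodule ⊔ ℝ ∙ ⁅J x, J y⁆ :=
    Submodule.span_le.mpr fun _ ⟨u, v, huv⟩ => huv ▸ lie_mem_sup_span_lie a hspan u v
  obtain ⟨w, hw, α, hα, hJxJy⟩ := exists_eq_add_smul_of_apply_mem_sup_span hJ.1 hxy hx hy hspan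
    (sup_le le_sup_left hderived ((mem_map_iff_apply_mem hJ.1).mp hJx))
  have hlie (z : L) (hz : z ∈ a.toSubmodule) : ⁅⁅J x, J y⁆, z⁆ = α • ⁅J x, z⁆ := by
    rw [hJxJy, add_lie, habel w hw z hz, zero_add, smul_lie]
  exact I.eq_neg_and_sq_add_mul_eq_zero_of_lie_lie_eq_smul hxy hα h₀ h₁
    (fun z hz => hdecomp ▸ a.lie_mem (hdecomp ▸ hz)) (hlie x hx) (hlie y hy)

theorem stmt6
    {L : Type*} [LieRing L] [LieAlgebra ℝ L] [FiniteDimensional ℝ L]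
    (a : LieIdeal ℝ L)
    (habel : ∀ u ∈ a.toSubmodule, ∀ v ∈ a.toSubmodule, ⁅u, v⁆ = (0 : L))
    (hcodim : finrank ℝ ↥a.toSubmodule + 2 = finrank ℝ L)
    (J : L →ₗ[ℝ] L) (hJ : IsComplexStructure J)
    (hJa : a.toSubmodule.map J ≠ a.toSubmodule)
    (hnonab : ¬ ∀ u v : L, ⁅u, v⁆ ∈ a.toSubmodule)
    (aJ a' bb : Submodule ℝ L)
    (haJ : aJ = a.toSubmodule ⊓ a.toSubmodule.map J)
    (ha' : a' = a.toSubmodule ⊔ Submodule.span ℝ {z : L | ∃ u v : L, ⁅u, v⁆ = z})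
    (hbb : bb = a.toSubmodule ⊓ a'.map J)
    :
    (∀ z : L, ∀ u ∈ aJ, ⁅z, u⁆ ∈ aJ) ∧
    (∀ x y : L, x ∈ bb → x ∉ aJ → y ∈ a.toSubmodule →
      a.toSubmodule = aJ ⊔ Submodule.span ℝ {x} ⊔ Submodule.span ℝ {y} →
      (∀ (s t : ℝ) (u : L), u ∈ aJ → s • x + t • y + u = 0 → s = 0 ∧ t = 0) →
      ∀ a₀ b₀ c₀ d₀ : ℝ,
        ⁅J x, x⁆ - (a₀ • x + b₀ • y) ∈ aJ →
        ⁅J x, y⁆ - (c₀ • x + d₀ • y) ∈ aJ →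
        d₀ = -a₀ ∧ a₀ ^ 2 + b₀ * c₀ = 0) :=
  stmt6_general a habel hcodim J hJ hJa aJ a' bb haJ ha' hbb
end

section
/- Let g be a finite-dimensional unimodular real Lie algebra containing an abelian ideal a of codimension 2, and J a complex structure on g with J(a) ≠ a and [g,g] ⊄ a. Let x ∈ 𝔟 \ a_J and y ∈ a with a = a_J ⊕ ℝx ⊕ ℝy, and let a, b, c, d, p, q, c', d', σ be the associated constants. Then d = −a, a² + bc = 0, p = c − σ, q = −a, and moreover: (i) if b ≠ 0 then c = −a²/b, c' = −(a/b)(c+σ), and d' = −c − 2σ; (ii) if b = 0 and c ≠ 0 then a = 0 and d' = c; (iii) if b = c = 0 then a = 0. -/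
open Module

theorem stmt7
    {L : Type*} [LieRing L] [LieAlgebra ℝ L] [FiniteDimensional ℝ L]
    (a : LieIdeal ℝ L)
    (habel : ∀ u ∈ a.toSubmodule, ∀ v ∈ a.toSubmodule, ⁅u, v⁆ = (0 : L))
    (hcodim : finrank ℝ ↥a.toSubmodule + 2 = finrank ℝ L)
    (J : L →ₗ[ℝ] L) (hJ : IsComplexStructure J)
    (huni : IsUnimodularLie L)
    (hJa : a.toSubmodule.map J ≠ a.toSubmodule)
    (hnonab : ¬ ∀ u v : L, ⁅u, v⁆ ∈ a.toSubmodule)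
    (aJ a' bb : Submodule ℝ L)
    (haJ : aJ = a.toSubmodule ⊓ a.toSubmodule.map J)
    (ha' : a' = a.toSubmodule ⊔ Submodule.span ℝ {z : L | ∃ u v : L, ⁅u, v⁆ = z})
    (hbb : bb = a.toSubmodule ⊓ a'.map J)
    (x y : L) (hxb : x ∈ bb) (hxnot : x ∉ aJ) (hy : y ∈ a.toSubmodule)
    (hspanx : a.toSubmodule = aJ ⊔ Submodule.span ℝ {x} ⊔ Submodule.span ℝ {y})
    (hindepx : ∀ (s t : ℝ) (u : L), u ∈ aJ → s • x + t • y + u = 0 → s = 0 ∧ t = 0)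
    (a₀ b₀ c₀ d₀ p q c' d' σ : ℝ)
    (h1 : ⁅J x, x⁆ - (a₀ • x + b₀ • y) ∈ aJ)
    (h2 : ⁅J x, y⁆ - (c₀ • x + d₀ • y) ∈ aJ)
    (h3 : ⁅J y, x⁆ - (p • x + q • y) ∈ aJ)
    (h4 : ⁅J y, y⁆ - (c' • x + d' • y) ∈ aJ)
    (h5 : ⁅J x, J y⁆ - σ • J x ∈ aJ) :
    d₀ = -a₀ ∧ a₀ ^ 2 + b₀ * c₀ = 0 ∧ p = c₀ - σ ∧ q = -a₀ ∧
    (b₀ ≠ 0 → c₀ = -(a₀ ^ 2) / b₀ ∧ c' = -(a₀ / b₀) * (c₀ + σ) ∧ d' = -c₀ - 2 * σ) ∧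
    (b₀ = 0 → c₀ ≠ 0 → a₀ = 0 ∧ d' = c₀) ∧
    (b₀ = 0 → c₀ = 0 → a₀ = 0) := by
  obtain ⟨hJ2, hJint⟩ := hJ
  have hxa : x ∈ a.toSubmodule := by rw [hbb] at hxb; exact hxb.1
  have haJa : ∀ u ∈ aJ, u ∈ a.toSubmodule := by
    intro u hu; rw [haJ] at hu; exact hu.1
  have haJJ : ∀ u ∈ aJ, J u ∈ aJ := by
    intro u hu
    rw [haJ] at hu ⊢
    obtain ⟨hu1, v, hv, hvu⟩ := hu
    refine ⟨?_, Submodule.mem_map_of_mem hu1⟩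
    rw [← hvu, hJ2]
    exact neg_mem hv
  have hliemem : ∀ (z : L), ∀ u ∈ a.toSubmodule, ⁅z, u⁆ ∈ a.toSubmodule := by
    intro z u hu
    rw [LieSubmodule.mem_toSubmodule] at hu ⊢
    exact a.lie_mem hu
  have hF2 : ∀ w ∈ a.toSubmodule, ∀ u ∈ aJ, ⁅J w, u⁆ ∈ aJ := by
    intro w hw u hu
    rw [haJ] at hu
    obtain ⟨hu1, v, hv, hvu⟩ := hu
    have h0 : ⁅w, v⁆ = 0 := habel w hw v hv
    have h1' : ⁅w, J v⁆ = 0 := by rw [hvu]; exact habel w hw u hu1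
    have hint := hJint w v
    rw [h0, h1', map_zero, zero_sub, add_zero] at hint
    have heq : ⁅J w, J v⁆ = J ⁅J w, v⁆ := by
      linear_combination (norm := module) -hint
    rw [← hvu, haJ]
    constructor
    · exact hliemem _ _ (by rw [hvu]; exact hu1)
    · rw [heq]; exact Submodule.mem_map_of_mem (hliemem _ _ hv)
  have hindepJ : ∀ (s t : ℝ) (u : L), u ∈ aJ → s • J x + t • J y + u = 0 → s = 0 ∧ t = 0 := by
    intro s t u hu h
    have h2 := congrArg J h
    rw [map_zero, map_add, map_add, map_smul, map_smul, hJ2, hJ2] at h2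
    have h3 : s • x + t • y + (-(J u)) = 0 := by
      linear_combination (norm := module) -h2
    exact hindepx s t _ (neg_mem (haJJ u hu)) h3
  -- σ ≠ 0
  have hJxna : J x ∉ a.toSubmodule := by
    intro h
    apply hxnot
    rw [haJ]
    refine ⟨hxa, ?_⟩
    have hm : -x ∈ a.toSubmodule.map J := by
      rw [← hJ2 x]; exact Submodule.mem_map_of_mem h
    simpa using neg_mem hm
  have hJyn : J y ∉ a.toSubmodule ⊔ Submodule.span ℝ {J x} := by
    intro h
    obtain ⟨v, hv, r, hr, hsum⟩ := Submodule.mem_sup.mp h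
    obtain ⟨α, rfl⟩ := Submodule.mem_span_singleton.mp hr
    have h2' := congrArg J hsum
    rw [map_add, map_smul, hJ2, hJ2] at h2'
    have h0 : α • x + (-1 : ℝ) • y + (-(J v)) = 0 := by
      linear_combination (norm := module) -h2'
    have hJv : J v ∈ aJ := by
      rw [haJ]
      refine ⟨?_, Submodule.mem_map_of_mem hv⟩
      have hv2 : J v = α • x - y := by linear_combination (norm := module) h2'
      rw [hv2]; exact sub_mem (Submodule.smul_mem _ _ hxa) hy
    have := (hindepx α (-1) _ (neg_mem hJv) h0).2
    norm_num at this
  have hσ : σ ≠ 0 := by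
    intro hσ0
    apply hnonab
    have hJJ : ⁅J x, J y⁆ ∈ a.toSubmodule := by
      have h5' := haJa _ h5
      rw [hσ0, zero_smul, sub_zero] at h5'
      exact h5'
    have hStop : a.toSubmodule ⊔ Submodule.span ℝ {J x} ⊔ Submodule.span ℝ {J y} = ⊤ := by
      apply Submodule.eq_top_of_finrank_eq
      have hlt1 : a.toSubmodule < a.toSubmodule ⊔ Submodule.span ℝ {J x} := by
        refine lt_of_le_of_ne le_sup_left (fun h => hJxna ?_)
        rw [h]
        exact Submodule.mem_sup_right (Submodule.mem_span_singleton_self _)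
      have hlt2 : a.toSubmodule ⊔ Submodule.span ℝ {J x} <
          a.toSubmodule ⊔ Submodule.span ℝ {J x} ⊔ Submodule.span ℝ {J y} := by
        refine lt_of_le_of_ne le_sup_left (fun h => hJyn ?_)
        rw [h]
        exact Submodule.mem_sup_right (Submodule.mem_span_singleton_self _)
      have f1 := Submodule.finrank_lt_finrank_of_lt hlt1
      have f2 := Submodule.finrank_lt_finrank_of_lt hlt2
      have f3 := Submodule.finrank_le (a.toSubmodule ⊔ Submodule.span ℝ {J x} ⊔ Submodule.span ℝ {J y})
      omega
    intro u v
    have hu : u ∈ a.toSubmodule ⊔ Submodule.span ℝ {J x} ⊔ Submodule.span ℝ {J y} :=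
      hStop ▸ Submodule.mem_top
    have hv : v ∈ a.toSubmodule ⊔ Submodule.span ℝ {J x} ⊔ Submodule.span ℝ {J y} :=
      hStop ▸ Submodule.mem_top
    obtain ⟨u', hu', r, hr, rfl⟩ := Submodule.mem_sup.mp hu
    obtain ⟨w1, hw1, s1, hs1, rfl⟩ := Submodule.mem_sup.mp hu'
    obtain ⟨α, rfl⟩ := Submodule.mem_span_singleton.mp hs1
    obtain ⟨β, rfl⟩ := Submodule.mem_span_singleton.mp hr
    obtain ⟨v', hv', r2, hr2, rfl⟩ := Submodule.mem_sup.mp hv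
    obtain ⟨w2, hw2, s2, hs2, rfl⟩ := Submodule.mem_sup.mp hv'
    obtain ⟨γ, rfl⟩ := Submodule.mem_span_singleton.mp hs2
    obtain ⟨δ, rfl⟩ := Submodule.mem_span_singleton.mp hr2
    have s1' : ⁅w1, J x⁆ = -⁅J x, w1⁆ := (lie_skew w1 (J x)).symm
    have s2' : ⁅w1, J y⁆ = -⁅J y, w1⁆ := (lie_skew w1 (J y)).symm
    have s3' : ⁅J y, J x⁆ = -⁅J x, J y⁆ := (lie_skew (J y) (J x)).symm
    have expand : ⁅w1 + α • J x + β • J y, w2 + γ • J x + δ • J y⁆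
        = ⁅w1 + α • J x + β • J y, w2⁆ + (-γ) • ⁅J x, w1⁆ + (-δ) • ⁅J y, w1⁆
          + (δ * α - γ * β) • ⁅J x, J y⁆ := by
      simp only [lie_add, add_lie, lie_smul, smul_lie, lie_self, s1', s2', s3',
        smul_zero, add_zero, smul_neg]
      module
    rw [expand]
    refine add_mem (add_mem (add_mem (hliemem _ _ hw2) ?_) ?_) ?_
    · exact Submodule.smul_mem _ _ (hliemem _ _ hw1)
    · exact Submodule.smul_mem _ _ (hliemem _ _ hw1)
    · exact Submodule.smul_mem _ _ hJJ
  -- normal forms for brackets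
  set u1 := ⁅J x, x⁆ - (a₀ • x + b₀ • y) with hu1d
  set u2 := ⁅J x, y⁆ - (c₀ • x + d₀ • y) with hu2d
  set u3 := ⁅J y, x⁆ - (p • x + q • y) with hu3d
  set u4 := ⁅J y, y⁆ - (c' • x + d' • y) with hu4d
  set u5 := ⁅J x, J y⁆ - σ • J x with hu5d
  have b1 : ⁅J x, x⁆ = a₀ • x + b₀ • y + u1 := by rw [hu1d]; module
  have b2 : ⁅J x, y⁆ = c₀ • x + d₀ • y + u2 := by rw [hu2d]; module
  have b3 : ⁅J y, x⁆ = p • x + q • y + u3 := by rw [hu3d]; module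
  have b4 : ⁅J y, y⁆ = c' • x + d' • y + u4 := by rw [hu4d]; module
  have b5 : ⁅J x, J y⁆ = σ • J x + u5 := by rw [hu5d]; module
  -- integrability on (x,y): E1
  have int1 := hJint x y
  have hsk : ⁅x, J y⁆ = -⁅J y, x⁆ := (lie_skew x (J y)).symm
  rw [habel x hxa y hy, hsk, b5, b2, b3, map_neg] at int1
  simp only [map_add, map_smul] at int1
  have key0 : (c₀ - p - σ) • J x + (d₀ - q) • J y + (J u2 - J u3 - u5) = 0 := by
    linear_combination (norm := module) int1
  obtain ⟨E1a, E1b⟩ := hindepJ _ _ _ (sub_mem (sub_mem (haJJ _ h2) (haJJ _ h3)) h5) key0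
  -- Jacobi (Jx, Jy, x): E2, E3
  have jac1 := lie_lie (J x) (J y) x
  rw [b5, b3, b1] at jac1
  simp only [add_lie, smul_lie, lie_add, lie_smul] at jac1
  rw [habel _ (haJa _ h5) x hxa, b1, b2, b4] at jac1
  have key1 : (σ * a₀ - q * c₀ + b₀ * c') • x + (σ * b₀ - p * b₀ - q * d₀ + a₀ * q + b₀ * d') • y
      + (σ • u1 - p • u1 - q • u2 - ⁅J x, u3⁆ + a₀ • u3 + b₀ • u4 + ⁅J y, u1⁆) = 0 := by
    linear_combination (norm := module) jac1
  obtain ⟨E2, E3⟩ := hindepx _ _ _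
    (add_mem (add_mem (add_mem (sub_mem (sub_mem (sub_mem (Submodule.smul_mem _ _ h1)
      (Submodule.smul_mem _ _ h1)) (Submodule.smul_mem _ _ h2)) (hF2 x hxa _ h3))
      (Submodule.smul_mem _ _ h3)) (Submodule.smul_mem _ _ h4)) (hF2 y hy _ h1)) key1
  -- Jacobi (Jx, Jy, y): E4, E5
  have jac2 := lie_lie (J x) (J y) y
  rw [b5, b4, b2] at jac2
  simp only [add_lie, smul_lie, lie_add, lie_smul] at jac2
  rw [habel _ (haJa _ h5) y hy, b1, b2, b3, b4] at jac2
  have key2 : (σ * c₀ - c' * a₀ - d' * c₀ + c₀ * p + d₀ * c') • x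
      + (σ * d₀ - c' * b₀ - d' * d₀ + c₀ * q + d₀ * d') • y
      + (σ • u2 - c' • u1 - d' • u2 - ⁅J x, u4⁆ + c₀ • u3 + d₀ • u4 + ⁅J y, u2⁆) = 0 := by
    linear_combination (norm := module) jac2
  obtain ⟨E4, E5⟩ := hindepx _ _ _
    (add_mem (add_mem (add_mem (sub_mem (sub_mem (sub_mem (Submodule.smul_mem _ _ h2)
      (Submodule.smul_mem _ _ h1)) (Submodule.smul_mem _ _ h2)) (hF2 x hxa _ h4))
      (Submodule.smul_mem _ _ h3)) (Submodule.smul_mem _ _ h4)) (hF2 y hy _ h2)) key2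
  -- pure algebra
  clear key0 key1 key2 jac1 jac2 int1 b1 b2 b3 b4 b5 h1 h2 h3 h4 h5
  have hq0 : q = d₀ := by linarith
  have hp0 : p = c₀ - σ := by linarith
  have hd : d₀ = -a₀ := by
    have hσad : σ * (a₀ + d₀) = 0 := by linear_combination E2 + E5
    rcases mul_eq_zero.mp hσad with h | h
    · exact absurd h hσ
    · linarith
  have hq : q = -a₀ := by linarith
  have e2' : σ * a₀ + a₀ * c₀ + b₀ * c' = 0 := by linear_combination E2 + c₀ * hq
  have e3' : 2 * σ * b₀ - c₀ * b₀ + b₀ * d' - 2 * a₀ ^ 2 = 0 := by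
    linear_combination E3 + b₀ * hp0 + q * hd - 2 * a₀ * hq
  have e4' : c₀ ^ 2 - 2 * a₀ * c' - d' * c₀ = 0 := by
    linear_combination E4 - c₀ * hp0 - c' * hd
  have habc : a₀ ^ 2 + b₀ * c₀ = 0 := by
    have h : σ * (a₀ ^ 2 + b₀ * c₀) = 0 := by
      linear_combination (b₀ / 2) * e4' + (c₀ / 2) * e3' + a₀ * e2'
    rcases mul_eq_zero.mp h with h | h
    · exact absurd h hσ
    · linarith
  refine ⟨hd, habc, hp0, hq, ?_, ?_, ?_⟩
  · intro hb
    refine ⟨?_, ?_, ?_⟩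
    · field_simp
      linear_combination habc
    · field_simp
      linear_combination e2'
    · have h : b₀ * (d' + c₀ + 2 * σ) = 0 := by linear_combination e3' + 2 * habc
      rcases mul_eq_zero.mp h with h | h
      · exact absurd h hb
      · linarith
  · intro hb hc
    have ha : a₀ = 0 := by
      have h2 : a₀ ^ 2 = 0 := by
        linear_combination (-1 / 2) * e3' + (σ - c₀ / 2 + d' / 2) * hb
      exact pow_eq_zero_iff (by norm_num) |>.mp h2
    refine ⟨ha, ?_⟩
    have h : c₀ * (c₀ - d') = 0 := by
      linear_combination e4' + 2 * c' * ha
    rcases mul_eq_zero.mp h with h | h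
    · exact absurd h hc
    · linarith
  · intro hb _
    have h2 : a₀ ^ 2 = 0 := by
      linear_combination (-1 / 2) * e3' + (σ - c₀ / 2 + d' / 2) * hb
    exact pow_eq_zero_iff (by norm_num) |>.mp h2
end

section
/- Let g be a finite-dimensional real Lie algebra containing an abelian ideal a of codimension 2, and J a complex structure on g with J(a) ≠ a and [g,g] ⊄ a. Assume J is generic, i.e. [J𝔟, 𝔟] ⊄ 𝔟. For i = 1, 2 let x_i ∈ 𝔟 \ a_J and y_i ∈ a with a = a_J ⊕ ℝx_i ⊕ ℝy_i, and let σ_i, b_i be the reals determined by [Jx_i, Jy_i] − σ_i·Jx_i ∈ a_J and [Jx_i, x_i] − (a_i x_i + b_i y_i) ∈ a_J. Then σ₁b₁ · σ₂b₂ > 0; in particular the sign of the product σb is independent of the choice of x and y (hence independent of the Hermitian metric used to make the choice). -/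
open Module

theorem stmt8
    {L : Type*} [LieRing L] [LieAlgebra ℝ L] [FiniteDimensional ℝ L]
    (a : LieIdeal ℝ L)
    (habel : ∀ u ∈ a.toSubmodule, ∀ v ∈ a.toSubmodule, ⁅u, v⁆ = (0 : L))
    (hcodim : finrank ℝ ↥a.toSubmodule + 2 = finrank ℝ L)
    (J : L →ₗ[ℝ] L) (hJ : IsComplexStructure J)
    (hJa : a.toSubmodule.map J ≠ a.toSubmodule)
    (hnonab : ¬ ∀ u v : L, ⁅u, v⁆ ∈ a.toSubmodule)
    (aJ a' bb : Submodule ℝ L)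
    (haJ : aJ = a.toSubmodule ⊓ a.toSubmodule.map J)
    (ha' : a' = a.toSubmodule ⊔ Submodule.span ℝ {z : L | ∃ u v : L, ⁅u, v⁆ = z})
    (hbb : bb = a.toSubmodule ⊓ a'.map J)
    (hgen : ¬ ∀ u ∈ bb, ∀ v ∈ bb, ⁅J u, v⁆ ∈ bb)
    (x₁ y₁ : L) (hx₁b : x₁ ∈ bb) (hx₁not : x₁ ∉ aJ) (hy₁ : y₁ ∈ a.toSubmodule)
    (hspanx₁ : a.toSubmodule = aJ ⊔ Submodule.span ℝ {x₁} ⊔ Submodule.span ℝ {y₁})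
    (hindepx₁ : ∀ (s t : ℝ) (u : L), u ∈ aJ → s • x₁ + t • y₁ + u = 0 → s = 0 ∧ t = 0)
    (x₂ y₂ : L) (hx₂b : x₂ ∈ bb) (hx₂not : x₂ ∉ aJ) (hy₂ : y₂ ∈ a.toSubmodule)
    (hspanx₂ : a.toSubmodule = aJ ⊔ Submodule.span ℝ {x₂} ⊔ Submodule.span ℝ {y₂})
    (hindepx₂ : ∀ (s t : ℝ) (u : L), u ∈ aJ → s • x₂ + t • y₂ + u = 0 → s = 0 ∧ t = 0)
    (σ₁ a₁ b₁ σ₂ a₂ b₂ : ℝ)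
    (hσ₁ : ⁅J x₁, J y₁⁆ - σ₁ • J x₁ ∈ aJ)
    (hab₁ : ⁅J x₁, x₁⁆ - (a₁ • x₁ + b₁ • y₁) ∈ aJ)
    (hσ₂ : ⁅J x₂, J y₂⁆ - σ₂ • J x₂ ∈ aJ)
    (hab₂ : ⁅J x₂, x₂⁆ - (a₂ • x₂ + b₂ • y₂) ∈ aJ) :
    (σ₁ * b₁) * (σ₂ * b₂) > 0 := by
  
  obtain ⟨hJ2, hint⟩ := hJ
  set A := a.toSubmodule with hA
  -- basic memberships
  have memA : ∀ (z p : L), p ∈ A → ⁅z, p⁆ ∈ A := fun z p hp => a.lie_mem hp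
  have memA' : ∀ (z p : L), p ∈ A → ⁅p, z⁆ ∈ A := by
    intro z p hp
    rw [← lie_skew]
    exact neg_mem (memA z p hp)
  have mapJ_mem : ∀ p : L, J p ∈ A → p ∈ A.map J := by
    intro p hp
    have h : p = J (-(J p)) := by rw [map_neg, hJ2, neg_neg]
    rw [h]
    exact Submodule.mem_map_of_mem (neg_mem hp)
  have hmemaJ : ∀ w : L, w ∈ aJ ↔ w ∈ A ∧ J w ∈ A := by
    intro w
    rw [haJ, Submodule.mem_inf]
    constructor
    · rintro ⟨h1, h2⟩
      refine ⟨h1, ?_⟩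
      obtain ⟨q, hq, hqw⟩ := h2
      rw [← hqw, hJ2]; exact neg_mem hq
    · rintro ⟨h1, h2⟩
      exact ⟨h1, mapJ_mem w h2⟩
  have haJ_le_A : aJ ≤ A := by rw [haJ]; exact inf_le_left
  have haJ_J : ∀ w ∈ aJ, J w ∈ aJ := by
    intro w hw
    rw [hmemaJ] at hw ⊢
    exact ⟨hw.2, by rw [hJ2]; exact neg_mem hw.1⟩
  -- key lemma: brackets of J(a) with aJ land in aJ
  have keyB : ∀ z ∈ A, ∀ w ∈ aJ, ⁅J z, w⁆ ∈ aJ := by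
    intro z hz w hw
    rw [hmemaJ] at hw
    have h0 : ⁅z, w⁆ = 0 := habel z hz w hw.1
    have h1 : ⁅z, J w⁆ = 0 := habel z hz (J w) hw.2
    have hI := hint z w
    rw [h0, h1, map_zero, zero_sub, add_zero, neg_add_eq_zero] at hI
    rw [hmemaJ]
    exact ⟨memA _ _ hw.1, by rw [← hI]; exact memA _ _ hw.2⟩
  -- basic facts on x₁
  have hbb_le : bb ≤ A := by rw [hbb]; exact inf_le_left
  have hx₁A : x₁ ∈ A := hbb_le hx₁b
  have hJx₁A : J x₁ ∉ A := by
    intro h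
    exact hx₁not ((hmemaJ x₁).2 ⟨hx₁A, h⟩)
  -- decomposition of L
  have hQ2 : finrank ℝ (L ⧸ A) = 2 := by
    have := Submodule.finrank_quotient_add_finrank A
    omega
  have hindQ : LinearIndependent ℝ ![A.mkQ (J x₁), A.mkQ (J y₁)] := by
    rw [LinearIndependent.pair_iff]
    intro s t hst
    have h0 : A.mkQ (s • J x₁ + t • J y₁) = 0 := by
      rw [map_add, map_smul, map_smul]; exact hst
    rw [Submodule.mkQ_apply, Submodule.Quotient.mk_eq_zero] at h0
    have h1 : s • J x₁ + t • J y₁ = J (s • x₁ + t • y₁) := by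
      rw [map_add, map_smul, map_smul]
    rw [h1] at h0
    have h2 : s • x₁ + t • y₁ ∈ aJ := by
      rw [hmemaJ]
      exact ⟨add_mem (Submodule.smul_mem _ _ hx₁A) (Submodule.smul_mem _ _ hy₁), h0⟩
    exact hindepx₁ s t _ (neg_mem h2) (add_neg_cancel _)
  have hspanQ : Submodule.span ℝ {A.mkQ (J x₁), A.mkQ (J y₁)} = ⊤ := by
    apply Submodule.eq_top_of_finrank_eq
    have hcard := finrank_span_eq_card hindQ
    rw [Fintype.card_fin] at hcard
    rw [show ({A.mkQ (J x₁), A.mkQ (J y₁)} : Set (L ⧸ A)) = Set.range ![A.mkQ (J x₁), A.mkQ (J y₁)]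
      by simp [Matrix.range_cons]; exact Set.pair_comm _ _]
    omega
  have hdecomp : ∀ z : L, ∃ p ∈ A, ∃ s t : ℝ, z = p + s • J x₁ + t • J y₁ := by
    intro z
    have hz : A.mkQ z ∈ Submodule.span ℝ {A.mkQ (J x₁), A.mkQ (J y₁)} := by
      rw [hspanQ]; trivial
    rw [Submodule.mem_span_pair] at hz
    obtain ⟨s, t, hst⟩ := hz
    refine ⟨z - s • J x₁ - t • J y₁, ?_, s, t, by abel⟩
    have h0 : A.mkQ (z - s • J x₁ - t • J y₁) = 0 := by
      rw [map_sub, map_sub, map_smul, map_smul, ← hst]; abel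
    rwa [Submodule.mkQ_apply, Submodule.Quotient.mk_eq_zero] at h0
  -- all brackets lie in N := A ⊔ span{⁅Jx₁, Jy₁⁆}
  set N : Submodule ℝ L := A ⊔ Submodule.span ℝ {⁅J x₁, J y₁⁆} with hN
  have hA_le_N : A ≤ N := le_sup_left
  have hbr_mem_N : ⁅J x₁, J y₁⁆ ∈ N :=
    Submodule.mem_sup_right (Submodule.mem_span_singleton_self _)
  have hskew : ∀ u v : L, ⁅u, v⁆ = -⁅v, u⁆ := fun u v => (lie_skew u v).symm
  have hNv : ∀ v : L, ⁅J x₁, v⁆ ∈ N ∧ ⁅J y₁, v⁆ ∈ N := by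
    intro v
    obtain ⟨q, hq, s', t', hv⟩ := hdecomp v
    rw [hv]
    constructor
    · simp only [lie_add, lie_smul, lie_self, smul_zero, add_zero]
      exact add_mem (hA_le_N (memA _ _ hq)) (Submodule.smul_mem _ _ hbr_mem_N)
    · simp only [lie_add, lie_smul, lie_self, smul_zero, add_zero]
      refine add_mem (hA_le_N (memA _ _ hq)) (Submodule.smul_mem _ _ ?_)
      rw [hskew (J y₁) (J x₁)]
      exact neg_mem hbr_mem_N
  have hbrN : ∀ u v : L, ⁅u, v⁆ ∈ N := by
    intro u v
    obtain ⟨p, hp, s, t, hu⟩ := hdecomp u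
    rw [hu]
    simp only [add_lie, smul_lie]
    exact add_mem (add_mem (hA_le_N (memA' _ _ hp)) (Submodule.smul_mem _ _ (hNv v).1))
      (Submodule.smul_mem _ _ (hNv v).2)
  -- σ₁ ≠ 0
  have hσ₁ne : σ₁ ≠ 0 := by
    intro h0
    apply hnonab
    intro u v
    have hbrA : ⁅J x₁, J y₁⁆ ∈ A := by
      have := haJ_le_A hσ₁
      rwa [h0, zero_smul, sub_zero] at this
    have hNA : N ≤ A := by
      rw [hN]
      exact sup_le le_rfl ((Submodule.span_le).2 (by simpa [Set.singleton_subset_iff] using hbrA))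
    exact hNA (hbrN u v)
  -- a' ≤ A ⊔ span{J x₁}
  set M : Submodule ℝ L := A ⊔ Submodule.span ℝ {J x₁} with hM
  have hJx₁M : J x₁ ∈ M := Submodule.mem_sup_right (Submodule.mem_span_singleton_self _)
  have hbrM : ⁅J x₁, J y₁⁆ ∈ M := by
    have h : ⁅J x₁, J y₁⁆ = (⁅J x₁, J y₁⁆ - σ₁ • J x₁) + σ₁ • J x₁ := by abel
    rw [h]
    exact add_mem (Submodule.mem_sup_left (haJ_le_A hσ₁)) (Submodule.smul_mem _ _ hJx₁M)
  have hNM : N ≤ M := by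
    rw [hN]
    exact sup_le le_sup_left ((Submodule.span_le).2 (by simpa [Set.singleton_subset_iff] using hbrM))
  have ha'M : a' ≤ M := by
    rw [ha']
    refine sup_le le_sup_left ((Submodule.span_le).2 ?_)
    rintro z ⟨u, v, rfl⟩
    exact hNM (hbrN u v)
  -- description of bb
  have hbbmem : ∀ w ∈ bb, ∃ u ∈ aJ, ∃ s : ℝ, w = u + s • x₁ := by
    intro w hw
    rw [hbb, Submodule.mem_inf] at hw
    obtain ⟨hwA, hwJ⟩ := hw
    obtain ⟨p, hp, hpw⟩ := hwJ
    have hpM := ha'M hp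
    rw [hM, Submodule.mem_sup] at hpM
    obtain ⟨q, hq, r, hr, hqr⟩ := hpM
    rw [Submodule.mem_span_singleton] at hr
    obtain ⟨c, rfl⟩ := hr
    have hw_eq : w = J q + (-c) • x₁ := by
      rw [← hpw, ← hqr, map_add, map_smul, hJ2]
      module
    refine ⟨J q, ?_, -c, hw_eq⟩
    rw [hmemaJ]
    constructor
    · have h : J q = w + c • x₁ := by rw [hw_eq]; module
      rw [h]
      exact add_mem hwA (Submodule.smul_mem _ _ hx₁A)
    · rw [hJ2]; exact neg_mem hq
  -- decompose x₂ and y₂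
  obtain ⟨u, huaJ, α, hx₂eq⟩ := hbbmem x₂ hx₂b
  have hα : α ≠ 0 := by
    rintro rfl
    rw [zero_smul, add_zero] at hx₂eq
    exact hx₂not (hx₂eq ▸ huaJ)
  have hy₂' : y₂ ∈ aJ ⊔ Submodule.span ℝ {x₁} ⊔ Submodule.span ℝ {y₁} := hspanx₁ ▸ hy₂
  rw [Submodule.mem_sup] at hy₂'
  obtain ⟨pq, hpq, r, hr, hsum⟩ := hy₂'
  rw [Submodule.mem_sup] at hpq
  obtain ⟨v, hvaJ, r', hr', hsum'⟩ := hpq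
  rw [Submodule.mem_span_singleton] at hr hr'
  obtain ⟨δ, rfl⟩ := hr
  obtain ⟨γ, rfl⟩ := hr'
  have hy₂eq : y₂ = v + γ • x₁ + δ • y₁ := by rw [← hsum, ← hsum']
  clear hsum hsum'
  -- J-expansions
  have hJx₂ : J x₂ = J u + α • J x₁ := by rw [hx₂eq, map_add, map_smul]
  have hJy₂ : J y₂ = J v + γ • J x₁ + δ • J y₁ := by
    rw [hy₂eq, map_add, map_add, map_smul, map_smul]
  have hJuA : J u ∈ aJ := haJ_J u huaJ
  have hJvA : J v ∈ aJ := haJ_J v hvaJ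
  -- (1) σ₂ = δ * σ₁
  have m1 : ⁅J u, J v⁆ = 0 := habel _ (haJ_le_A hJuA) _ (haJ_le_A hJvA)
  have m2 : ⁅J u, J x₁⁆ ∈ aJ := by
    rw [hskew]
    exact neg_mem (keyB x₁ hx₁A (J u) hJuA)
  have m3 : ⁅J u, J y₁⁆ ∈ aJ := by
    rw [hskew]
    exact neg_mem (keyB y₁ hy₁ (J u) hJuA)
  have m4 : ⁅J x₁, J v⁆ ∈ aJ := keyB x₁ hx₁A (J v) hJvA
  have hkey : ⁅J x₂, J y₂⁆ - σ₂ • J x₂ - (α * δ * σ₁ - σ₂ * α) • J x₁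
      = ⁅J u, J v⁆ + γ • ⁅J u, J x₁⁆ + δ • ⁅J u, J y₁⁆ + α • ⁅J x₁, J v⁆
        + (α * δ) • (⁅J x₁, J y₁⁆ - σ₁ • J x₁) - σ₂ • J u := by
    rw [hJx₂, hJy₂]
    simp only [lie_add, add_lie, lie_smul, smul_lie, lie_self, smul_zero]
    module
  have hmemkey : (α * δ * σ₁ - σ₂ * α) • J x₁ ∈ aJ := by
    have h1 : ⁅J x₂, J y₂⁆ - σ₂ • J x₂ - (α * δ * σ₁ - σ₂ * α) • J x₁ ∈ aJ := by
      rw [hkey]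
      refine sub_mem (add_mem (add_mem (add_mem (add_mem ?_ (Submodule.smul_mem _ _ m2))
        (Submodule.smul_mem _ _ m3)) (Submodule.smul_mem _ _ m4))
        (Submodule.smul_mem _ _ hσ₁)) (Submodule.smul_mem _ _ hJuA)
      rw [m1]; exact zero_mem _
    have h2 := sub_mem hσ₂ h1
    rwa [sub_sub_cancel] at h2
  have hσδ : σ₂ = δ * σ₁ := by
    by_contra hne
    have hc : α * δ * σ₁ - σ₂ * α ≠ 0 := by
      intro h
      apply hne
      have h' : α * (δ * σ₁ - σ₂) = 0 := by linear_combination h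
      rcases mul_eq_zero.mp h' with h'' | h''
      · exact absurd h'' hα
      · linarith
    have := haJ_le_A hmemkey
    rw [Submodule.smul_mem_iff _ hc] at this
    exact hJx₁A this
  -- (2) α² b₁ = δ b₂
  have hkey2 : ⁅J x₂, x₂⁆ - (a₂ • x₂ + b₂ • y₂)
      - ((α * α * a₁ - a₂ * α - b₂ * γ) • x₁ + (α * α * b₁ - b₂ * δ) • y₁)
      = ⁅J u, u⁆ + α • ⁅J u, x₁⁆ + α • ⁅J x₁, u⁆
        + (α * α) • (⁅J x₁, x₁⁆ - (a₁ • x₁ + b₁ • y₁)) - a₂ • u - b₂ • v := by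
    rw [hJx₂, hx₂eq, hy₂eq]
    simp only [lie_add, add_lie, lie_smul, smul_lie, lie_self, smul_zero]
    module
  have hmem2 : (α * α * a₁ - a₂ * α - b₂ * γ) • x₁ + (α * α * b₁ - b₂ * δ) • y₁ ∈ aJ := by
    have e0 : ⁅J u, u⁆ = 0 := habel _ (haJ_le_A hJuA) _ (haJ_le_A huaJ)
    have e1 : ⁅J u, x₁⁆ = 0 := habel _ (haJ_le_A hJuA) _ hx₁A
    have h1 : ⁅J x₂, x₂⁆ - (a₂ • x₂ + b₂ • y₂)
        - ((α * α * a₁ - a₂ * α - b₂ * γ) • x₁ + (α * α * b₁ - b₂ * δ) • y₁) ∈ aJ := by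
      rw [hkey2, e0, e1]
      refine sub_mem (sub_mem (add_mem (add_mem (add_mem (zero_mem _)
        (Submodule.smul_mem _ _ (zero_mem _))) (Submodule.smul_mem _ _ (keyB x₁ hx₁A u huaJ)))
        (Submodule.smul_mem _ _ hab₁)) (Submodule.smul_mem _ _ huaJ)) (Submodule.smul_mem _ _ hvaJ)
    have h2 := sub_mem hab₂ h1
    rwa [sub_sub_cancel] at h2
  have hb₂δ : α * α * b₁ - b₂ * δ = 0 :=
    (hindepx₁ _ _ _ (neg_mem hmem2) (add_neg_cancel _)).2
  -- (3) b₁ ≠ 0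
  have haJ_le_bb : aJ ≤ bb := by
    rw [haJ, hbb]
    refine inf_le_inf le_rfl (Submodule.map_mono ?_)
    rw [ha']; exact le_sup_left
  have hb₁ : b₁ ≠ 0 := by
    intro h0
    apply hgen
    intro w hw z hz
    obtain ⟨w₀, hw₀, s, hweq⟩ := hbbmem w hw
    obtain ⟨z₀, hz₀, t, hzeq⟩ := hbbmem z hz
    have e1 : ⁅J w₀, z₀⁆ = 0 := habel _ (haJ_le_A (haJ_J _ hw₀)) _ (haJ_le_A hz₀)
    have e2 : ⁅J w₀, x₁⁆ = 0 := habel _ (haJ_le_A (haJ_J _ hw₀)) _ hx₁A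
    have e3 : ⁅J x₁, z₀⁆ ∈ bb := haJ_le_bb (keyB x₁ hx₁A z₀ hz₀)
    have e4 : ⁅J x₁, x₁⁆ ∈ bb := by
      rw [h0, zero_smul, add_zero] at hab₁
      have h : ⁅J x₁, x₁⁆ = (⁅J x₁, x₁⁆ - a₁ • x₁) + a₁ • x₁ := by abel
      rw [h]
      exact add_mem (haJ_le_bb hab₁) (Submodule.smul_mem _ _ hx₁b)
    rw [hweq, hzeq, map_add, map_smul]
    simp only [lie_add, add_lie, lie_smul, smul_lie]
    rw [e1, e2]
    simp only [smul_zero, zero_add, add_zero]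
    exact add_mem (Submodule.smul_mem _ _ e3) (Submodule.smul_mem _ _ (Submodule.smul_mem _ _ e4))
  -- conclusion
  have hprod : (σ₁ * b₁) * (σ₂ * b₂) = (σ₁ * b₁ * α) ^ 2 := by
    rw [hσδ]; linear_combination (-(σ₁ ^ 2 * b₁)) * hb₂δ
  rw [gt_iff_lt, hprod]
  exact pow_two_pos_of_ne_zero (mul_ne_zero (mul_ne_zero hσ₁ne hb₁) hα)
end

section
/- Let g be a finite-dimensional real Lie algebra containing an abelian ideal a of codimension 2, and J a complex structure on g with J(a) ≠ a and [g,g] ⊄ a. Assume J is degenerate, i.e. [J𝔟, a] ⊆ a_J. Let x ∈ 𝔟 \ a_J and y ∈ a with a = a_J ⊕ ℝx ⊕ ℝy, and let c', d' be the reals with [Jy,y] − (c'x + d'y) ∈ a_J. Then d' = 0 if and only if [g,a] ⊆ 𝔟. In particular, whether d' = 0 holds is independent of the choice of x and y (hence of the Hermitian metric used to make the choice). -/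
open Module

/-!
Since `a` is abelian, the integrability of `J` reads `⁅J p, J q⁆ = J (⁅J p, q⁆ + ⁅p, J q⁆)` on `a`.
Together with degeneracy this shows that `ad (J q)` preserves `a_J` and `𝔟` for `q ∈ a`. As
`𝔤 = a + J a` (a dimension count) and `a = a_J ⊕ ℝx ⊕ ℝy` with `x ∈ 𝔟`, the only bracket that can
leave `𝔟` is `⁅J y, y⁆`; so `[𝔤, a] ⊆ 𝔟` iff `⁅J y, y⁆ ∈ 𝔟`. Finally `y ∉ 𝔟`, for otherwise
`a ⊆ 𝔟` and degeneracy forces `[𝔤, 𝔤] ⊆ a`; hence `⁅J y, y⁆ ≡ c' x + d' y` lies in `𝔟` iff `d' = 0`.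
-/

theorem Submodule.smul_add_smul_mem_iff {K V : Type*} [Field K] [AddCommGroup V] [Module K V]
    {W : Submodule K V} {x y : V} (hx : x ∈ W) (hy : y ∉ W) (c d : K) :
    c • x + d • y ∈ W ↔ d = 0 := by
  rw [Submodule.add_mem_iff_right W (W.smul_mem c hx)]
  refine ⟨fun h => by_contra fun hd => hy ((W.smul_mem_iff hd).1 h), fun hd => ?_⟩
  rw [hd, zero_smul]
  exact W.zero_mem

theorem Submodule.finrank_eq_add_two_of_eq_sup_span {K V : Type*} [Field K] [AddCommGroup V]
    [Module K V] [FiniteDimensional K V] {U W : Submodule K V} {x y : V}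
    (hU : U = W ⊔ span K {x} ⊔ span K {y})
    (hindep : ∀ (s t : K) (u : V), u ∈ W → s • x + t • y + u = 0 → s = 0 ∧ t = 0) :
    finrank K U = finrank K W + 2 := by
  have hx : x ∉ W := fun hx => one_ne_zero (hindep 1 0 (-x) (W.neg_mem hx) (by simp)).1
  have hy : y ∉ W ⊔ span K {x} := by
    intro hy
    obtain ⟨u, hu, _, hsx, hsum⟩ := mem_sup.1 hy
    obtain ⟨s, rfl⟩ := mem_span_singleton.1 hsx
    have := (hindep s (-1) u hu (by rw [← hsum]; module)).2
    norm_num at this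
  rw [hU, finrank_sup_span_singleton hy, finrank_sup_span_singleton hx]

section ComplexStructure

variable {L : Type*} [LieRing L] [LieAlgebra ℝ L] {J : L →ₗ[ℝ] L}

namespace IsComplexStructure

theorem apply_apply (hJ : IsComplexStructure J) (x : L) : J (J x) = -x := hJ.1 x

theorem lie_apply_apply (hJ : IsComplexStructure J) (p q : L) :
    ⁅J p, J q⁆ = ⁅p, q⁆ + J ⁅J p, q⁆ + J ⁅p, J q⁆ := by
  rw [eq_comm, ← sub_eq_zero, ← hJ.2 p q]
  abel

theorem injective (hJ : IsComplexStructure J) : Function.Injective J := fun u v h => by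
  simpa [hJ.apply_apply] using congrArg J h

theorem mem_map_iff (hJ : IsComplexStructure J) {V : Submodule ℝ L} {z : L} :
    z ∈ V.map J ↔ J z ∈ V := by
  refine ⟨?_, fun hz => ⟨-J z, V.neg_mem hz, by simp [hJ.apply_apply]⟩⟩
  rintro ⟨w, hw, rfl⟩
  simpa [hJ.apply_apply] using hw

theorem apply_mem_inf_map (hJ : IsComplexStructure J) {V : Submodule ℝ L} {u : L}
    (hu : u ∈ V ⊓ V.map J) : J u ∈ V ⊓ V.map J :=
  ⟨hJ.mem_map_iff.1 hu.2, Submodule.mem_map_of_mem hu.1⟩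

theorem finrank_map (hJ : IsComplexStructure J) (V : Submodule ℝ L) :
    finrank ℝ (V.map J) = finrank ℝ V :=
  (Submodule.equivMapOfInjective J hJ.injective V).finrank_eq.symm

theorem sup_map_eq_top [FiniteDimensional ℝ L] (hJ : IsComplexStructure J) {V : Submodule ℝ L}
    (hV : finrank ℝ V + 2 = finrank ℝ L) (hcore : finrank ℝ V = finrank ℝ ↥(V ⊓ V.map J) + 2) :
    V ⊔ V.map J = ⊤ := by
  apply Submodule.eq_top_of_finrank_eq
  have := Submodule.finrank_sup_add_finrank_inf_eq V (V.map J)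
  rw [hJ.finrank_map] at this
  omega

end IsComplexStructure

theorem Submodule.exists_add_apply_eq_of_sup_map_eq_top {V : Submodule ℝ L}
    (htop : V ⊔ V.map J = ⊤) (z : L) : ∃ p ∈ V, ∃ q ∈ V, p + J q = z := by
  obtain ⟨p, hp, _, ⟨q, hq, rfl⟩, h⟩ := Submodule.mem_sup.1 (htop ▸ Submodule.mem_top (x := z))
  exact ⟨p, hp, q, hq, h⟩

section AbelianIdeal

variable {a : LieIdeal ℝ L}

theorem lie_apply_apply_of_mem
    (habel : ∀ u ∈ a.toSubmodule, ∀ v ∈ a.toSubmodule, ⁅u, v⁆ = (0 : L))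
    (hJ : IsComplexStructure J) {p q : L} (hp : p ∈ a.toSubmodule) (hq : q ∈ a.toSubmodule) :
    ⁅J p, J q⁆ = J (⁅J p, q⁆ + ⁅p, J q⁆) := by
  rw [hJ.lie_apply_apply, habel p hp q hq, zero_add, map_add]

theorem lie_apply_mem_inf_map
    (habel : ∀ u ∈ a.toSubmodule, ∀ v ∈ a.toSubmodule, ⁅u, v⁆ = (0 : L))
    (hJ : IsComplexStructure J) {w u : L} (hw : w ∈ a.toSubmodule)
    (hu : u ∈ a.toSubmodule ⊓ a.toSubmodule.map J) :
    ⁅J w, u⁆ ∈ a.toSubmodule ⊓ a.toSubmodule.map J := by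
  obtain ⟨q, hq, rfl⟩ := hu.2
  refine ⟨a.lie_mem hu.1, ?_⟩
  rw [lie_apply_apply_of_mem habel hJ hw hq]
  exact Submodule.mem_map_of_mem (add_mem (a.lie_mem hq) (lie_mem_left ℝ L a _ _ hw))

theorem lie_mem_of_lie_apply_mem_map
    (habel : ∀ u ∈ a.toSubmodule, ∀ v ∈ a.toSubmodule, ⁅u, v⁆ = (0 : L))
    (hJ : IsComplexStructure J) (htop : a.toSubmodule ⊔ a.toSubmodule.map J = ⊤)
    (hJa : ∀ u ∈ a.toSubmodule, ∀ v ∈ a.toSubmodule, ⁅J u, v⁆ ∈ a.toSubmodule.map J) (z w : L) :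
    ⁅z, w⁆ ∈ a.toSubmodule := by
  obtain ⟨p, hp, q, hq, rfl⟩ := Submodule.exists_add_apply_eq_of_sup_map_eq_top htop z
  obtain ⟨r, hr, s, hs, rfl⟩ := Submodule.exists_add_apply_eq_of_sup_map_eq_top htop w
  have hJJ : ⁅J q, J s⁆ ∈ a.toSubmodule := by
    rw [lie_apply_apply_of_mem habel hJ hq hs, ← lie_skew q (J s)]
    exact hJ.mem_map_iff.1 (add_mem (hJa q hq s hs) (neg_mem (hJa s hs q hq)))
  rw [add_lie, lie_add, lie_add, habel p hp r hr, zero_add]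
  exact add_mem (lie_mem_left ℝ L a _ _ hp) (add_mem (a.lie_mem hr) hJJ)

theorem lie_apply_mem_of_degenerate
    (habel : ∀ u ∈ a.toSubmodule, ∀ v ∈ a.toSubmodule, ⁅u, v⁆ = (0 : L))
    (hJ : IsComplexStructure J) {a' : Submodule ℝ L} (hbr : ∀ u v : L, ⁅u, v⁆ ∈ a')
    (haa' : a.toSubmodule ≤ a')
    (hdeg : ∀ u ∈ a.toSubmodule ⊓ a'.map J, ∀ v ∈ a.toSubmodule,
      ⁅J u, v⁆ ∈ a.toSubmodule ⊓ a.toSubmodule.map J) {q u : L} (hq : q ∈ a.toSubmodule)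
    (hu : u ∈ a.toSubmodule ⊓ a'.map J) : ⁅J q, u⁆ ∈ a.toSubmodule ⊓ a'.map J := by
  refine ⟨a.lie_mem hu.1, hJ.mem_map_iff.2 ?_⟩
  have : J ⁅J q, u⁆ = ⁅J q, J u⁆ + J ⁅J u, q⁆ := by
    rw [lie_apply_apply_of_mem habel hJ hq hu.1, map_add, ← lie_skew (J u) q, map_neg]
    abel
  rw [this]
  exact add_mem (hbr _ _) (haa' (hJ.apply_mem_inf_map (hdeg u hu q hq)).1)

theorem lie_mem_of_lie_apply_self_mem
    (habel : ∀ u ∈ a.toSubmodule, ∀ v ∈ a.toSubmodule, ⁅u, v⁆ = (0 : L))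
    (hJ : IsComplexStructure J) {a' : Submodule ℝ L} (hbr : ∀ u v : L, ⁅u, v⁆ ∈ a')
    (haa' : a.toSubmodule ≤ a')
    (hdeg : ∀ u ∈ a.toSubmodule ⊓ a'.map J, ∀ v ∈ a.toSubmodule,
      ⁅J u, v⁆ ∈ a.toSubmodule ⊓ a.toSubmodule.map J)
    (htop : a.toSubmodule ⊔ a.toSubmodule.map J = ⊤) {x y : L}
    (hspan : a.toSubmodule = a.toSubmodule ⊓ a.toSubmodule.map J ⊔ Submodule.span ℝ {x} ⊔
      Submodule.span ℝ {y})
    (hx : x ∈ a.toSubmodule ⊓ a'.map J) (hy : y ∈ a.toSubmodule)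
    (hyy : ⁅J y, y⁆ ∈ a.toSubmodule ⊓ a'.map J) (z v : L) (hv : v ∈ a.toSubmodule) :
    ⁅z, v⁆ ∈ a.toSubmodule ⊓ a'.map J := by
  set B := a.toSubmodule ⊓ a'.map J
  have hcore : a.toSubmodule ⊓ a.toSubmodule.map J ≤ B :=
    inf_le_inf_left _ (Submodule.map_mono haa')
  have hJy : a.toSubmodule ≤ B.comap (LieAlgebra.ad ℝ L (J y)) := by
    rw [hspan]
    refine sup_le (sup_le (fun u hu => hcore (lie_apply_mem_inf_map habel hJ hy hu)) ?_) ?_ <;>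
      rw [Submodule.span_singleton_le_iff_mem, Submodule.mem_comap, LieAlgebra.ad_apply]
    exacts [lie_apply_mem_of_degenerate habel hJ hbr haa' hdeg hy hx, hyy]
  have hJq :
      a.toSubmodule ≤ B.comap ((LieAlgebra.ad ℝ L : L →ₗ[ℝ] Module.End ℝ L).flip v ∘ₗ J) := by
    rw [hspan]
    refine sup_le (sup_le (fun u hu => hcore ?_) ?_) ?_ <;>
      simp only [Submodule.span_singleton_le_iff_mem, Submodule.mem_comap, LinearMap.comp_apply,
        LinearMap.flip_apply, LieHom.coe_toLinearMap, LieAlgebra.ad_apply]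
    exacts [hdeg u (hcore hu) v hv, hcore (hdeg x hx v hv), hJy hv]
  obtain ⟨p, hp, q, hq, rfl⟩ := Submodule.exists_add_apply_eq_of_sup_map_eq_top htop z
  rw [add_lie, habel p hp v hv, zero_add]
  simpa using hJq hq

end AbelianIdeal

end ComplexStructure

theorem stmt9_general
    {L : Type*} [LieRing L] [LieAlgebra ℝ L] [FiniteDimensional ℝ L]
    (a : LieIdeal ℝ L)
    (habel : ∀ u ∈ a.toSubmodule, ∀ v ∈ a.toSubmodule, ⁅u, v⁆ = (0 : L))
    (hcodim : finrank ℝ ↥a.toSubmodule + 2 = finrank ℝ L)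
    (J : L →ₗ[ℝ] L) (hJ : IsComplexStructure J)
    (hnonab : ¬ ∀ u v : L, ⁅u, v⁆ ∈ a.toSubmodule)
    (aJ a' bb : Submodule ℝ L)
    (haJ : aJ = a.toSubmodule ⊓ a.toSubmodule.map J)
    (ha' : a' = a.toSubmodule ⊔ Submodule.span ℝ {z : L | ∃ u v : L, ⁅u, v⁆ = z})
    (hbb : bb = a.toSubmodule ⊓ a'.map J)
    (hdeg : ∀ u ∈ bb, ∀ v ∈ a.toSubmodule, ⁅J u, v⁆ ∈ aJ)
    (x y : L) (hxb : x ∈ bb) (hy : y ∈ a.toSubmodule)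
    (hspanx : a.toSubmodule = aJ ⊔ Submodule.span ℝ {x} ⊔ Submodule.span ℝ {y})
    (hindepx : ∀ (s t : ℝ) (u : L), u ∈ aJ → s • x + t • y + u = 0 → s = 0 ∧ t = 0)
    (c' d' : ℝ) (hc'd' : ⁅J y, y⁆ - (c' • x + d' • y) ∈ aJ) :
    d' = 0 ↔ (∀ z : L, ∀ v ∈ a.toSubmodule, ⁅z, v⁆ ∈ bb) := by
  subst haJ hbb
  have haa' : a.toSubmodule ≤ a' := ha' ▸ le_sup_left
  have hbr : ∀ u v : L, ⁅u, v⁆ ∈ a' := fun u v =>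
    ha' ▸ Submodule.mem_sup_right (Submodule.subset_span ⟨u, v, rfl⟩)
  have hcore : a.toSubmodule ⊓ a.toSubmodule.map J ≤ a.toSubmodule ⊓ a'.map J :=
    inf_le_inf_left _ (Submodule.map_mono haa')
  have htop := hJ.sup_map_eq_top hcodim
    (Submodule.finrank_eq_add_two_of_eq_sup_span hspanx hindepx)
  have hyb : y ∉ a.toSubmodule ⊓ a'.map J := by
    intro hyb
    have hab : a.toSubmodule ≤ a.toSubmodule ⊓ a'.map J := hspanx.le.trans <|
      sup_le (sup_le hcore ((Submodule.span_singleton_le_iff_mem _ _).2 hxb))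
        ((Submodule.span_singleton_le_iff_mem _ _).2 hyb)
    exact hnonab <| lie_mem_of_lie_apply_mem_map habel hJ htop fun u hu v hv =>
      (hdeg u (hab hu) v hv).2
  have hJyy := Submodule.add_mem_iff_right _ (y := c' • x + d' • y) (hcore hc'd')
  rw [sub_add_cancel] at hJyy
  rw [← Submodule.smul_add_smul_mem_iff hxb hyb c', ← hJyy]
  exact ⟨lie_mem_of_lie_apply_self_mem habel hJ hbr haa' hdeg htop hspanx hxb hy,
    fun h => h _ _ hy⟩

theorem stmt9
    {L : Type*} [LieRing L] [LieAlgebra ℝ L] [FiniteDimensional ℝ L]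
    (a : LieIdeal ℝ L)
    (habel : ∀ u ∈ a.toSubmodule, ∀ v ∈ a.toSubmodule, ⁅u, v⁆ = (0 : L))
    (hcodim : finrank ℝ ↥a.toSubmodule + 2 = finrank ℝ L)
    (J : L →ₗ[ℝ] L) (hJ : IsComplexStructure J)
    (hJa : a.toSubmodule.map J ≠ a.toSubmodule)
    (hnonab : ¬ ∀ u v : L, ⁅u, v⁆ ∈ a.toSubmodule)
    (aJ a' bb : Submodule ℝ L)
    (haJ : aJ = a.toSubmodule ⊓ a.toSubmodule.map J)
    (ha' : a' = a.toSubmodule ⊔ Submodule.span ℝ {z : L | ∃ u v : L, ⁅u, v⁆ = z})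
    (hbb : bb = a.toSubmodule ⊓ a'.map J)
    (hdeg : ∀ u ∈ bb, ∀ v ∈ a.toSubmodule, ⁅J u, v⁆ ∈ aJ)
    (x y : L) (hxb : x ∈ bb) (hxnot : x ∉ aJ) (hy : y ∈ a.toSubmodule)
    (hspanx : a.toSubmodule = aJ ⊔ Submodule.span ℝ {x} ⊔ Submodule.span ℝ {y})
    (hindepx : ∀ (s t : ℝ) (u : L), u ∈ aJ → s • x + t • y + u = 0 → s = 0 ∧ t = 0)
    (c' d' : ℝ) (hc'd' : ⁅J y, y⁆ - (c' • x + d' • y) ∈ aJ) :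
    d' = 0 ↔ (∀ z : L, ∀ v ∈ a.toSubmodule, ⁅z, v⁆ ∈ bb) :=
  stmt9_general a habel hcodim J hJ hnonab aJ a' bb haJ ha' hbb hdeg x y hxb hy hspanx hindepx c' d'
    hc'd'
end

section
/- Let g be a finite-dimensional real Lie algebra containing an abelian ideal a of codimension 2 with [g,g] ⊆ a, and let J be a complex structure on g with J(a) ≠ a. Set a_J := a ∩ J(a). Then for all u, v ∈ a one has [Ju, v] − [Jv, u] ∈ a_J and [Ju, Jv] ∈ a_J. -/
open Module

theorem stmt14
    {L : Type*} [LieRing L] [LieAlgebra ℝ L] [FiniteDimensional ℝ L]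
    (a : LieIdeal ℝ L)
    (habel : ∀ u ∈ a.toSubmodule, ∀ v ∈ a.toSubmodule, ⁅u, v⁆ = (0 : L))
    (hcodim : finrank ℝ ↥a.toSubmodule + 2 = finrank ℝ L)
    (J : L →ₗ[ℝ] L) (hJ : IsComplexStructure J)
    (hcomm : ∀ u v : L, ⁅u, v⁆ ∈ a.toSubmodule)
    (hJa : a.toSubmodule.map J ≠ a.toSubmodule)
    (aJ : Submodule ℝ L)
    (haJ : aJ = a.toSubmodule ⊓ a.toSubmodule.map J)
    :
    ∀ u ∈ a.toSubmodule, ∀ v ∈ a.toSubmodule,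
      ⁅J u, v⁆ - ⁅J v, u⁆ ∈ aJ ∧ ⁅J u, J v⁆ ∈ aJ := by
  intro u hu v hv
  subst haJ
  have huv : ⁅u, v⁆ = (0 : L) := habel u hu v hv
  have hint := hJ.2 u v
  rw [huv, zero_sub] at hint
  -- hint : -⁅J u, J v⁆ + J ⁅J u, v⁆ + J ⁅u, J v⁆ = 0
  set w : L := ⁅J u, v⁆ - ⁅J v, u⁆ with hw
  have hkey : ⁅J u, J v⁆ = J w := by
    have h2 : ⁅J u, J v⁆ - (J ⁅J u, v⁆ + J ⁅u, J v⁆) = 0 := by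
      rw [← neg_eq_zero, ← hint]; abel
    have h3 : ⁅J u, J v⁆ = J ⁅J u, v⁆ + J ⁅u, J v⁆ := sub_eq_zero.mp h2
    have h4 : ⁅u, J v⁆ = -⁅J v, u⁆ := by rw [← lie_skew]
    rw [h3, h4, hw, map_sub, map_neg, sub_eq_add_neg]
  have hwa : w ∈ a.toSubmodule := by
    exact sub_mem (hcomm _ _) (hcomm _ _)
  have hwJ : w ∈ a.toSubmodule.map J := by
    refine ⟨-⁅J u, J v⁆, neg_mem (hcomm _ _), ?_⟩
    rw [map_neg, hkey, hJ.1, neg_neg]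
  have hbJ : ⁅J u, J v⁆ ∈ a.toSubmodule.map J := ⟨w, hwa, hkey.symm⟩
  exact ⟨⟨hwa, hwJ⟩, ⟨hcomm _ _, hbJ⟩⟩
end

section
/- Let g be a finite-dimensional unimodular real Lie algebra of dimension 2n containing an abelian ideal a of codimension 2 with [g,g] ⊆ a, and J a complex structure on g with J(a) ≠ a. Suppose (g,J) admits a pluriclosed Hermitian metric. Then for every choice of x, y ∈ a with a = a_J ⊕ ℝx ⊕ ℝy, if the associated constants satisfy a + d = 0, then ad − bc ≤ 0 (that is, the induced traceless action of ad(Jx) on a/a_J has nonpositive determinant). -/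
open Module

/-!
Write `a_J = a ∩ J a`. Integrability shows that for `w ∈ a` the derivation `ad (J w)` preserves
`a_J` and commutes with `J` on it; let `T` and `S` be the restrictions of `ad (J x)` and
`ad (J y)` to `a_J`, and write `[J y, y] ≡ c' x + d' y` modulo `a_J`. Since `ad (J w)` takes values
in `a`, its trace is the trace on `a_J` plus the trace of the induced map on `a / a_J`, so
unimodularity gives `tr T = -(a + d) = 0` and `tr S = -(c + d')`.

Evaluating `d dᶜω` on `(u, J u, x, J x)` for the vectors `u` of an orthonormal basis of `a_J`
and summing gives `tr T² + tr (Tᵗ T) + a tr T + b tr S = 0`, and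
`tr T² + tr (Tᵗ T) = ½ tr ((T + Tᵗ)ᵗ (T + Tᵗ)) ≥ 0`; hence `b (c + d') ≥ 0`. The Jacobi identity
`[J x, [J y, x]] = [J y, [J x, x]]`, read modulo `a_J`, gives `b c + d² - a d - b d' = 0`, and with
`a = -d` the two combine to `a d - b c = -(d² + b c) ≤ 0`.
-/

namespace Submodule

variable {K V : Type*} [Field K] [AddCommGroup V] [Module K V]

theorem linearIndependent_mkQ_pair (W : Submodule K V) {x y : V}
    (h : ∀ (s t : K) (u : V), u ∈ W → s • x + t • y + u = 0 → s = 0 ∧ t = 0) :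
    LinearIndependent K ![W.mkQ x, W.mkQ y] := by
  refine LinearIndependent.pair_iff.2 fun s t hst => h s t _ (W.neg_mem ?_) (add_neg_cancel _)
  rwa [← map_smul, ← map_smul, ← map_add, mkQ_apply, Quotient.mk_eq_zero] at hst

end Submodule

namespace LinearMap

section Field

variable {K V : Type*} [Field K] [AddCommGroup V] [Module K V] [FiniteDimensional K V]

theorem trace_eq_trace_restrict_add_trace_mapQ (W : Submodule K V) (f : V →ₗ[K] V)
    (hf : W ≤ W.comap f) :
    trace K V f = trace K W (f.restrict hf) + trace K (V ⧸ W) (W.mapQ W f hf) := by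
  let bW := Module.Free.chooseBasis K W
  let bQ := Module.Free.chooseBasis K (V ⧸ W)
  rw [trace_eq_matrix_trace K (bW.sumQuot bQ), trace_eq_matrix_trace K bW,
    trace_eq_matrix_trace K bQ]
  simp only [Matrix.trace, Matrix.diag, toMatrix_apply, Fintype.sum_sum_type]
  congr 1
  · refine Finset.sum_congr rfl fun i _ => ?_
    rw [Basis.sumQuot_inl, Basis.sumQuot_repr_inl_of_mem bW bQ _ (hf (bW i).2)]
    rfl
  · refine Finset.sum_congr rfl fun j _ => ?_
    rw [Basis.sumQuot_repr_inr, Submodule.mkQ_apply, ← Submodule.mapQ_apply W W f,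
      Basis.sumQuot_inr]

theorem trace_eq_add_of_range_le_span_pair {x y : V} (hxy : LinearIndependent K ![x, y])
    {f : V →ₗ[K] V} (hf : range f ≤ Submodule.span K {x, y}) {p q r s : K}
    (hfx : f x = p • x + q • y) (hfy : f y = r • x + s • y) :
    trace K V f = p + s := by
  let b := Basis.span hxy
  have hmaps : ∀ v, f v ∈ Submodule.span K (Set.range ![x, y]) := fun v => by
    rw [Matrix.range_cons_cons_empty]; exact hf (mem_range_self f v)
  have hb0 : f.restrict (fun v _ => hmaps v) (b 0) = p • b 0 + q • b 1 := by
    ext; simp [b, Basis.span_apply, hfx]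
  have hb1 : f.restrict (fun v _ => hmaps v) (b 1) = r • b 0 + s • b 1 := by
    ext; simp [b, Basis.span_apply, hfy]
  rw [← trace_restrict_eq_of_forall_mem _ f hmaps, trace_eq_matrix_trace K b,
    Matrix.trace_fin_two, toMatrix_apply, toMatrix_apply, hb0, hb1]
  simp

theorem trace_eq_trace_restrict_add_of_range_le_sup_span_pair (W : Submodule K V)
    (f : V →ₗ[K] V) (hf : W ≤ W.comap f) {x y : V}
    (hxy : LinearIndependent K ![W.mkQ x, W.mkQ y])
    (hrange : range f ≤ W ⊔ Submodule.span K {x, y}) {p q r s : K}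
    (hfx : f x - (p • x + q • y) ∈ W) (hfy : f y - (r • x + s • y) ∈ W) :
    trace K V f = trace K W (f.restrict hf) + (p + s) := by
  have hmk : ∀ {v v'}, f v - v' ∈ W → W.mapQ W f hf (W.mkQ v) = W.mkQ v' :=
    fun h => (Submodule.Quotient.eq W).2 h
  rw [trace_eq_trace_restrict_add_trace_mapQ W f hf]
  congr 1
  refine trace_eq_add_of_range_le_span_pair hxy ?_ (by simpa using hmk hfx)
    (by simpa using hmk hfy)
  rintro _ ⟨v, rfl⟩
  obtain ⟨v, rfl⟩ := W.mkQ_surjective v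
  have hv : W.mkQ (f v) ∈ (W ⊔ Submodule.span K {x, y}).map W.mkQ :=
    Submodule.mem_map_of_mem (hrange (mem_range_self f v))
  rwa [Submodule.map_sup, Submodule.mkQ_map_self, bot_sup_eq, Submodule.map_span,
    Set.image_pair] at hv

end Field

section InnerProductSpace

variable {E : Type*} [NormedAddCommGroup E] [InnerProductSpace ℝ E] [FiniteDimensional ℝ E]

theorem trace_adjoint (T : E →ₗ[ℝ] E) : trace ℝ E (adjoint T) = trace ℝ E T := by
  let b := stdOrthonormalBasis ℝ E
  rw [trace_eq_sum_inner _ b, trace_eq_sum_inner _ b]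
  refine Finset.sum_congr rfl fun i _ => ?_
  rw [adjoint_inner_right, real_inner_comm]

theorem trace_comp_self_add_trace_adjoint_comp_self_nonneg (T : E →ₗ[ℝ] E) :
    0 ≤ trace ℝ E (T ∘ₗ T) + trace ℝ E (adjoint T ∘ₗ T) := by
  have h := (isPositive_adjoint_comp_self (T + adjoint T)).trace_nonneg
  have hTT : trace ℝ E (adjoint T ∘ₗ adjoint T) = trace ℝ E (T ∘ₗ T) := by
    rw [← adjoint_comp, trace_adjoint]
  rw [map_add, adjoint_adjoint, add_comp, comp_add, comp_add, map_add, map_add, map_add, hTT] at h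
  linarith [trace_comp_comm' T (adjoint T)]

end InnerProductSpace

end LinearMap

namespace Submodule

variable {R M : Type*} [CommRing R] [AddCommGroup M] [Module R M]

def complexPart (J : M →ₗ[R] M) (p : Submodule R M) : Submodule R M := p ⊓ p.map J

variable {J : M →ₗ[R] M} {p : Submodule R M} {v : M}

theorem mem_complexPart_iff (hJ : ∀ v, J (J v) = -v) :
    v ∈ p.complexPart J ↔ v ∈ p ∧ J v ∈ p := by
  refine and_congr_right fun _ => ⟨fun ⟨w, hw, hwv⟩ => ?_, fun h => ⟨-J v, p.neg_mem h, ?_⟩⟩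
  · rw [← hwv, hJ]; exact p.neg_mem hw
  · rw [map_neg, hJ, neg_neg]

theorem map_mem_complexPart (hJ : ∀ v, J (J v) = -v) (hv : v ∈ p.complexPart J) :
    J v ∈ p.complexPart J := by
  rw [mem_complexPart_iff hJ] at hv ⊢
  exact ⟨hv.2, hJ v ▸ p.neg_mem hv.1⟩

end Submodule

namespace IsComplexStructure

variable {L : Type*} [LieRing L] [LieAlgebra ℝ L] {J : L →ₗ[ℝ] L} {A : Submodule ℝ L}
  {x y w u : L}

theorem lie_map_map_of_lie_eq_zero (hJ : IsComplexStructure J) (h₁ : ⁅u, w⁆ = 0)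
    (h₂ : ⁅J u, w⁆ = 0) : ⁅J w, J u⁆ = J ⁅J w, u⁆ := by
  have h := hJ.2 u w
  rw [h₁, h₂, map_zero, zero_sub, add_zero, neg_add_eq_zero] at h
  rw [← lie_skew, h, ← map_neg, lie_skew]

theorem lie_map_map_of_mem_complexPart (hJ : IsComplexStructure J)
    (habel : ∀ v ∈ A, ∀ v' ∈ A, ⁅v, v'⁆ = 0) (hw : w ∈ A) (hu : u ∈ A.complexPart J) :
    ⁅J w, J u⁆ = J ⁅J w, u⁆ := by
  rw [Submodule.mem_complexPart_iff hJ.1] at hu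
  exact hJ.lie_map_map_of_lie_eq_zero (habel u hu.1 w hw) (habel _ hu.2 w hw)

theorem lie_map_mem_complexPart (hJ : IsComplexStructure J)
    (habel : ∀ v ∈ A, ∀ v' ∈ A, ⁅v, v'⁆ = 0) (hcomm : ∀ v v' : L, ⁅v, v'⁆ ∈ A) (hw : w ∈ A)
    (hu : u ∈ A.complexPart J) : ⁅J w, u⁆ ∈ A.complexPart J := by
  rw [Submodule.mem_complexPart_iff hJ.1, ← hJ.lie_map_map_of_mem_complexPart habel hw hu]
  exact ⟨hcomm _ _, hcomm _ _⟩

theorem lie_map_sub_lie_map_mem_complexPart (hJ : IsComplexStructure J)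
    (habel : ∀ v ∈ A, ∀ v' ∈ A, ⁅v, v'⁆ = 0) (hcomm : ∀ v v' : L, ⁅v, v'⁆ ∈ A) (hx : x ∈ A)
    (hy : y ∈ A) : ⁅J x, y⁆ - ⁅J y, x⁆ ∈ A.complexPart J := by
  have h := hJ.2 x y
  rw [habel x hx y hy, ← lie_skew x (J y), map_neg] at h
  have hJ' : J (⁅J x, y⁆ - ⁅J y, x⁆) = ⁅J x, J y⁆ := by
    rw [map_sub]; linear_combination (norm := module) h
  rw [Submodule.mem_complexPart_iff hJ.1, hJ']
  exact ⟨A.sub_mem (hcomm _ _) (hcomm _ _), hcomm _ _⟩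

theorem trace_ad_eq [FiniteDimensional ℝ L] (hJ : IsComplexStructure J)
    (habel : ∀ v ∈ A, ∀ v' ∈ A, ⁅v, v'⁆ = 0) (hcomm : ∀ v v' : L, ⁅v, v'⁆ ∈ A) (hw : w ∈ A)
    (hxy : LinearIndependent ℝ ![(A.complexPart J).mkQ x, (A.complexPart J).mkQ y])
    (hA : A ≤ A.complexPart J ⊔ Submodule.span ℝ {x, y})
    {T : A.complexPart J →ₗ[ℝ] A.complexPart J} (hT : ∀ u, (T u : L) = ⁅J w, (u : L)⁆)
    {p q r s : ℝ} (hwx : ⁅J w, x⁆ - (p • x + q • y) ∈ A.complexPart J)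
    (hwy : ⁅J w, y⁆ - (r • x + s • y) ∈ A.complexPart J) :
    LinearMap.trace ℝ L (LieAlgebra.ad ℝ L (J w))
      = LinearMap.trace ℝ (A.complexPart J) T + (p + s) := by
  have hf : A.complexPart J ≤ (A.complexPart J).comap (LieAlgebra.ad ℝ L (J w)) :=
    fun u hu => hJ.lie_map_mem_complexPart habel hcomm hw hu
  obtain rfl : T = (LieAlgebra.ad ℝ L (J w)).restrict hf := by ext u; exact hT u
  exact LinearMap.trace_eq_trace_restrict_add_of_range_le_sup_span_pair _ _ hf hxy
    (by rintro _ ⟨v, rfl⟩; exact hA (hcomm _ _)) hwx hwy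

theorem jacobi_relation (hJ : IsComplexStructure J) (habel : ∀ v ∈ A, ∀ v' ∈ A, ⁅v, v'⁆ = 0)
    (hcomm : ∀ v v' : L, ⁅v, v'⁆ ∈ A) (hx : x ∈ A) (hy : y ∈ A)
    (hxy : LinearIndependent ℝ ![(A.complexPart J).mkQ x, (A.complexPart J).mkQ y])
    {a b c d c' d' : ℝ} (hxx : ⁅J x, x⁆ - (a • x + b • y) ∈ A.complexPart J)
    (hxy' : ⁅J x, y⁆ - (c • x + d • y) ∈ A.complexPart J)
    (hyx : ⁅J y, x⁆ - (c • x + d • y) ∈ A.complexPart J)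
    (hyy : ⁅J y, y⁆ - (c' • x + d' • y) ∈ A.complexPart J) :
    b * c + d * d - a * d - b * d' = 0 := by
  set P := A.complexPart J
  have hmk : ∀ {v v' : L}, v - v' ∈ P → P.mkQ v = P.mkQ v' :=
    fun h => (Submodule.Quotient.eq P).2 h
  have had : ∀ {w v v' : L}, w ∈ A → v - v' ∈ P → P.mkQ ⁅J w, v⁆ = P.mkQ ⁅J w, v'⁆ :=
    fun hw h => hmk (by rw [← lie_sub]; exact hJ.lie_map_mem_complexPart habel hcomm hw h)
  have hjac : ⁅J x, ⁅J y, x⁆⁆ = ⁅J y, ⁅J x, x⁆⁆ := by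
    rw [leibniz_lie, habel _ (hcomm _ _) x hx, zero_add]
  have hl : P.mkQ ⁅J x, ⁅J y, x⁆⁆
      = c • (a • P.mkQ x + b • P.mkQ y) + d • (c • P.mkQ x + d • P.mkQ y) := by
    rw [had hx hyx, lie_add, lie_smul, lie_smul, map_add, map_smul, map_smul, hmk hxx, hmk hxy']
    simp only [map_add, map_smul]
  have hr : P.mkQ ⁅J y, ⁅J x, x⁆⁆
      = a • (c • P.mkQ x + d • P.mkQ y) + b • (c' • P.mkQ x + d' • P.mkQ y) := by
    rw [had hy hxx, lie_add, lie_smul, lie_smul, map_add, map_smul, map_smul, hmk hyx, hmk hyy]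
    simp only [map_add, map_smul]
  rw [hjac] at hl
  exact (LinearIndependent.pair_iff.1 hxy (c * a + d * c - a * c - b * c')
    (b * c + d * d - a * d - b * d') (by linear_combination (norm := module) hr - hl)).2

end IsComplexStructure

namespace HermMetric

variable {L : Type*} [LieRing L] [LieAlgebra ℝ L] {J : L →ₗ[ℝ] L}
  {A : Submodule ℝ L} {x y u : L}

theorem ddcOmega_eq_of_mem_complexPart (g : HermMetric J) (hJ : IsComplexStructure J)
    (habel : ∀ v ∈ A, ∀ v' ∈ A, ⁅v, v'⁆ = 0) (hcomm : ∀ v v' : L, ⁅v, v'⁆ ∈ A) (hx : x ∈ A)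
    (hy : y ∈ A) (hu : u ∈ A.complexPart J) {a b : ℝ}
    (hxx : ⁅J x, x⁆ - (a • x + b • y) ∈ A.complexPart J) :
    g.ddcOmega u (J u) x (J x) = 2 * (g.B ⁅J x, ⁅J x, u⁆⁆ u + g.B ⁅J x, u⁆ ⁅J x, u⁆
      + a * g.B ⁅J x, u⁆ u + b * g.B ⁅J y, u⁆ u) := by
  set P := A.complexPart J
  set α := ⁅J x, x⁆ - (a • x + b • y)
  have hJ2 := hJ.1
  have hP : ∀ {v}, v ∈ P → J v ∈ P := Submodule.map_mem_complexPart hJ2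
  have hPA : ∀ {v}, v ∈ P → v ∈ A := fun hv => hv.1
  have hT : ∀ {v}, v ∈ P → ⁅J x, v⁆ ∈ P := hJ.lie_map_mem_complexPart habel hcomm hx
  have hPP : ∀ v ∈ P, ∀ v' ∈ P, ⁅v, v'⁆ = 0 := fun v hv v' hv' => habel v (hPA hv) v' (hPA hv')
  have hPx : ∀ v ∈ P, ⁅v, x⁆ = 0 := fun v hv => habel v (hPA hv) x hx
  have hxJ : ∀ v ∈ P, ⁅J x, J v⁆ = J ⁅J x, v⁆ :=
    fun v hv => hJ.lie_map_map_of_mem_complexPart habel hx hv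
  have hyJ : ∀ v ∈ P, ⁅J y, J v⁆ = J ⁅J y, v⁆ :=
    fun v hv => hJ.lie_map_map_of_mem_complexPart habel hy hv
  -- the membership premise keeps `simp` from rewriting `⁅J x, J x⁆` forever
  have hskew : ∀ v ∈ P, ⁅v, J x⁆ = -⁅J x, v⁆ := fun v _ => (lie_skew _ _).symm
  have hxJx : ⁅x, J x⁆ = -(α + a • x + b • y) := by
    rw [← lie_skew]; simp only [α]; abel
  have hJu := hP hu
  have hTu := hT hu
  have hJTu := hP hTu
  have hJα := hP hxx
  simp only [ddcOmega, dcOmega, dOmega, omega, hxJx, hJ2, hPP, hPx, hxJ, hyJ, hskew, hu, hJu, hTu,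
    hJTu, hJα, map_neg, map_add, map_smul, map_zero, lie_neg, neg_lie, add_lie, smul_lie, zero_lie,
    LinearMap.add_apply, LinearMap.neg_apply, LinearMap.smul_apply, LinearMap.zero_apply,
    smul_eq_mul, g.compat]
  ring

abbrev innerProductCore (g : HermMetric J) (P : Submodule ℝ L) : InnerProductSpace.Core ℝ P where
  inner u v := g.B u v
  conj_inner_symm u v := g.symm v u
  re_inner_nonneg u := by
    rcases eq_or_ne (u : L) 0 with h | h
    · simp [h]
    · exact (g.posdef _ h).le
  definite u hu := Subtype.ext <| by_contra fun h => (g.posdef _ h).ne' hu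
  add_left u v w := by simp
  smul_left u v r := by simp

theorem mul_trace_add_mul_trace_nonpos [FiniteDimensional ℝ L] (g : HermMetric J)
    (hg : g.IsPluriclosed) (hJ : IsComplexStructure J) (habel : ∀ v ∈ A, ∀ v' ∈ A, ⁅v, v'⁆ = 0)
    (hcomm : ∀ v v' : L, ⁅v, v'⁆ ∈ A) (hx : x ∈ A) (hy : y ∈ A) {a b : ℝ}
    (hxx : ⁅J x, x⁆ - (a • x + b • y) ∈ A.complexPart J)
    {T S : A.complexPart J →ₗ[ℝ] A.complexPart J} (hT : ∀ u, (T u : L) = ⁅J x, (u : L)⁆)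
    (hS : ∀ u, (S u : L) = ⁅J y, (u : L)⁆) :
    a * LinearMap.trace ℝ _ T + b * LinearMap.trace ℝ _ S ≤ 0 := by
  let core := g.innerProductCore (A.complexPart J)
  let _ : NormedAddCommGroup (A.complexPart J) := core.toNormedAddCommGroup
  let _ : InnerProductSpace ℝ (A.complexPart J) := InnerProductSpace.ofCore core.toCore
  let e := stdOrthonormalBasis ℝ (A.complexPart J)
  have hsum : LinearMap.trace ℝ _ (T ∘ₗ T) + LinearMap.trace ℝ _ (LinearMap.adjoint T ∘ₗ T)
      + a * LinearMap.trace ℝ _ T + b * LinearMap.trace ℝ _ S = 0 := by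
    simp only [LinearMap.trace_eq_sum_inner _ e, LinearMap.comp_apply,
      LinearMap.adjoint_inner_right, Finset.mul_sum, ← Finset.sum_add_distrib]
    refine Finset.sum_eq_zero fun k _ => ?_
    have h := g.ddcOmega_eq_of_mem_complexPart hJ habel hcomm hx hy (e k).2 hxx
    rw [hg] at h
    change g.B (e k) (T (T (e k))) + g.B (T (e k)) (T (e k)) + a * g.B (e k) (T (e k))
      + b * g.B (e k) (S (e k)) = 0
    rw [hT, hT, hS, g.symm (e k), g.symm (e k), g.symm (e k)]
    linarith
  linarith [LinearMap.trace_comp_self_add_trace_adjoint_comp_self_nonneg T]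

end HermMetric

theorem stmt15_general
    {L : Type*} [LieRing L] [LieAlgebra ℝ L] [FiniteDimensional ℝ L]
    (a : LieIdeal ℝ L)
    (habel : ∀ u ∈ a.toSubmodule, ∀ v ∈ a.toSubmodule, ⁅u, v⁆ = (0 : L))
    (J : L →ₗ[ℝ] L) (hJ : IsComplexStructure J)
    (huni : IsUnimodularLie L)
    (hcomm : ∀ u v : L, ⁅u, v⁆ ∈ a.toSubmodule)
    (aJ : Submodule ℝ L)
    (haJ : aJ = a.toSubmodule ⊓ a.toSubmodule.map J)
    (hplu : ∃ g : HermMetric J, g.IsPluriclosed) :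
    ∀ x y : L, x ∈ a.toSubmodule → y ∈ a.toSubmodule →
      a.toSubmodule = aJ ⊔ Submodule.span ℝ {x} ⊔ Submodule.span ℝ {y} →
      (∀ (s t : ℝ) (u : L), u ∈ aJ → s • x + t • y + u = 0 → s = 0 ∧ t = 0) →
      ∀ a₀ b₀ c₀ d₀ : ℝ,
        ⁅J x, x⁆ - (a₀ • x + b₀ • y) ∈ aJ →
        ⁅J x, y⁆ - (c₀ • x + d₀ • y) ∈ aJ →
        a₀ + d₀ = 0 →
        a₀ * d₀ - b₀ * c₀ ≤ 0 := by
  intro x y hx hy hsp hind a₀ b₀ c₀ d₀ hxx hxy had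
  obtain ⟨g, hg⟩ := hplu
  obtain rfl : aJ = a.toSubmodule.complexPart J := haJ
  have hli := Submodule.linearIndependent_mkQ_pair _ hind
  have hA : a.toSubmodule ≤ a.toSubmodule.complexPart J ⊔ Submodule.span ℝ {x, y} := by
    rw [Submodule.span_insert, ← sup_assoc]; exact hsp.le
  have hyx : ⁅J y, x⁆ - (c₀ • x + d₀ • y) ∈ a.toSubmodule.complexPart J := by
    simpa using Submodule.sub_mem _ hxy (hJ.lie_map_sub_lie_map_mem_complexPart habel hcomm hx hy)
  obtain ⟨c₂, d₂, hyy⟩ :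
      ∃ c₂ d₂ : ℝ, ⁅J y, y⁆ - (c₂ • x + d₂ • y) ∈ a.toSubmodule.complexPart J := by
    obtain ⟨v, hv, w, hw, hvw⟩ := Submodule.mem_sup.1 (hA (hcomm (J y) y))
    obtain ⟨c₂, d₂, rfl⟩ := Submodule.mem_span_pair.1 hw
    exact ⟨c₂, d₂, by rwa [← hvw, add_sub_cancel_right]⟩
  let T := (LieAlgebra.ad ℝ L (J x)).restrict fun _ => hJ.lie_map_mem_complexPart habel hcomm hx
  let S := (LieAlgebra.ad ℝ L (J y)).restrict fun _ => hJ.lie_map_mem_complexPart habel hcomm hy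
  have htrT := hJ.trace_ad_eq habel hcomm hx hli hA (T := T) (fun _ => rfl) hxx hxy
  have htrS := hJ.trace_ad_eq habel hcomm hy hli hA (T := S) (fun _ => rfl) hyx hyy
  have hpc := g.mul_trace_add_mul_trace_nonpos hg hJ habel hcomm hx hy hxx (T := T) (S := S)
    (fun _ => rfl) (fun _ => rfl)
  have hjac := hJ.jacobi_relation habel hcomm hx hy hli hxx hxy hyx hyy
  rw [huni] at htrT htrS
  rw [show LinearMap.trace ℝ _ T = 0 by linarith,
    show LinearMap.trace ℝ _ S = -(c₀ + d₂) by linarith] at hpc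
  obtain rfl : a₀ = -d₀ := by linarith
  linarith

theorem stmt15
    {L : Type*} [LieRing L] [LieAlgebra ℝ L] [FiniteDimensional ℝ L]
    (a : LieIdeal ℝ L)
    (habel : ∀ u ∈ a.toSubmodule, ∀ v ∈ a.toSubmodule, ⁅u, v⁆ = (0 : L))
    (hcodim : finrank ℝ ↥a.toSubmodule + 2 = finrank ℝ L)
    (J : L →ₗ[ℝ] L) (hJ : IsComplexStructure J)
    (huni : IsUnimodularLie L)
    (n : ℕ) (hdim : finrank ℝ L = 2 * n)
    (hcomm : ∀ u v : L, ⁅u, v⁆ ∈ a.toSubmodule)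
    (hJa : a.toSubmodule.map J ≠ a.toSubmodule)
    (aJ : Submodule ℝ L)
    (haJ : aJ = a.toSubmodule ⊓ a.toSubmodule.map J)
    (hplu : ∃ g : HermMetric J, g.IsPluriclosed) :
    ∀ x y : L, x ∈ a.toSubmodule → y ∈ a.toSubmodule →
      a.toSubmodule = aJ ⊔ Submodule.span ℝ {x} ⊔ Submodule.span ℝ {y} →
      (∀ (s t : ℝ) (u : L), u ∈ aJ → s • x + t • y + u = 0 → s = 0 ∧ t = 0) →
      ∀ a₀ b₀ c₀ d₀ : ℝ,
        ⁅J x, x⁆ - (a₀ • x + b₀ • y) ∈ aJ →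
        ⁅J x, y⁆ - (c₀ • x + d₀ • y) ∈ aJ →
        a₀ + d₀ = 0 →
        a₀ * d₀ - b₀ * c₀ ≤ 0 :=
  stmt15_general a habel J hJ huni hcomm aJ haJ hplu
end

section
/- Let g be a finite-dimensional real Lie algebra containing an abelian ideal a of codimension 2 with [g,g] ⊆ a, and J a complex structure on g with J(a) ≠ a. Set a_J := a ∩ J(a) and suppose r₀ := dim(([g,g] + a_J)/a_J) = 2. For i = 1, 2 let x_i, y_i ∈ a with a = a_J ⊕ ℝx_i ⊕ ℝy_i, let a_i, b_i, c_i, d_i be the associated constants (with [Jx_i, x_i] − (a_i x_i + b_i y_i) ∈ a_J and [Jx_i, y_i] − (c_i x_i + d_i y_i) ∈ a_J), and assume a_i + d_i = 0 for both i. Then the determinants have the same sign: (a₁d₁ − b₁c₁)(a₂d₂ − b₂c₂) ≥ 0, and a₁d₁ − b₁c₁ = 0 if and only if a₂d₂ − b₂c₂ = 0. In other words, the sign of det(A_x) for traceless A_x depends only on J and not on the choice of x, y. -/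
open Module

set_option maxHeartbeats 2000000 in
theorem stmt17
    {L : Type*} [LieRing L] [LieAlgebra ℝ L] [FiniteDimensional ℝ L]
    (a : LieIdeal ℝ L)
    (habel : ∀ u ∈ a.toSubmodule, ∀ v ∈ a.toSubmodule, ⁅u, v⁆ = (0 : L))
    (hcodim : finrank ℝ ↥a.toSubmodule + 2 = finrank ℝ L)
    (J : L →ₗ[ℝ] L) (hJ : IsComplexStructure J)
    (hcomm : ∀ u v : L, ⁅u, v⁆ ∈ a.toSubmodule)
    (hJa : a.toSubmodule.map J ≠ a.toSubmodule)
    (aJ : Submodule ℝ L)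
    (haJ : aJ = a.toSubmodule ⊓ a.toSubmodule.map J)
    (W : Submodule ℝ L)
    (hW : W = Submodule.span ℝ {z : L | ∃ u v : L, ⁅u, v⁆ = z} ⊔ aJ)
    (hrank : finrank ℝ ↥W = finrank ℝ ↥aJ + 2)
    (x₁ y₁ : L) (hx₁ : x₁ ∈ a.toSubmodule) (hy₁ : y₁ ∈ a.toSubmodule)
    (hspanx₁ : a.toSubmodule = aJ ⊔ Submodule.span ℝ {x₁} ⊔ Submodule.span ℝ {y₁})
    (hindepx₁ : ∀ (s t : ℝ) (u : L), u ∈ aJ → s • x₁ + t • y₁ + u = 0 → s = 0 ∧ t = 0)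
    (x₂ y₂ : L) (hx₂ : x₂ ∈ a.toSubmodule) (hy₂ : y₂ ∈ a.toSubmodule)
    (hspanx₂ : a.toSubmodule = aJ ⊔ Submodule.span ℝ {x₂} ⊔ Submodule.span ℝ {y₂})
    (hindepx₂ : ∀ (s t : ℝ) (u : L), u ∈ aJ → s • x₂ + t • y₂ + u = 0 → s = 0 ∧ t = 0)
    (a₁ b₁ c₁ d₁ a₂ b₂ c₂ d₂ : ℝ)
    (h11 : ⁅J x₁, x₁⁆ - (a₁ • x₁ + b₁ • y₁) ∈ aJ)
    (h12 : ⁅J x₁, y₁⁆ - (c₁ • x₁ + d₁ • y₁) ∈ aJ)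
    (h21 : ⁅J x₂, x₂⁆ - (a₂ • x₂ + b₂ • y₂) ∈ aJ)
    (h22 : ⁅J x₂, y₂⁆ - (c₂ • x₂ + d₂ • y₂) ∈ aJ)
    (htr₁ : a₁ + d₁ = 0) (htr₂ : a₂ + d₂ = 0) :
    (a₁ * d₁ - b₁ * c₁) * (a₂ * d₂ - b₂ * c₂) ≥ 0 ∧
    (a₁ * d₁ - b₁ * c₁ = 0 ↔ a₂ * d₂ - b₂ * c₂ = 0) := by
  classical
  obtain ⟨hJJ, hint⟩ := hJ
  -- membership in aJ
  have hmemJ : ∀ u : L, u ∈ a.toSubmodule.map J ↔ J u ∈ a.toSubmodule := by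
    intro u
    constructor
    · rintro ⟨w, hw, rfl⟩
      rw [hJJ]
      exact neg_mem hw
    · intro h
      exact ⟨-J u, neg_mem h, by rw [map_neg, hJJ, neg_neg]⟩
  have hmem : ∀ u : L, u ∈ aJ ↔ u ∈ a.toSubmodule ∧ J u ∈ a.toSubmodule := by
    intro u
    rw [haJ, Submodule.mem_inf, hmemJ]
  have haJA : ∀ u ∈ aJ, u ∈ a.toSubmodule := fun u hu => ((hmem u).mp hu).1
  have hJaJ : ∀ u ∈ aJ, J u ∈ a.toSubmodule := fun u hu => ((hmem u).mp hu).2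
  -- key bracket lemma: for x ∈ a, u ∈ aJ, ⁅Jx, u⁆ ∈ aJ
  have hbaJ : ∀ x ∈ a.toSubmodule, ∀ u ∈ aJ, ⁅J x, u⁆ ∈ aJ := by
    intro x hx u hu
    have hv : -J u ∈ a.toSubmodule := neg_mem (hJaJ u hu)
    have hJv : J (-J u) = u := by rw [map_neg, hJJ, neg_neg]
    have h0 := hint x (-J u)
    rw [hJv, habel x hx _ hv, habel x hx u (haJA u hu)] at h0
    -- h0 : 0 - ⁅J x, u⁆ + J ⁅J x, -J u⁆ + J 0 = 0
    have hEq : ⁅J x, u⁆ = J ⁅J x, -J u⁆ := by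
      rw [map_zero, add_zero, zero_sub, neg_add_eq_zero] at h0
      exact h0
    rw [hmem]
    refine ⟨hcomm _ _, ?_⟩
    rw [hEq, hJJ]
    exact neg_mem (hcomm _ _)
  -- difference lemma
  have hdiff : ∀ x ∈ a.toSubmodule, ∀ y ∈ a.toSubmodule,
      ⁅J x, y⁆ - ⁅J y, x⁆ ∈ aJ := by
    intro x hx y hy
    have h0 := hint x y
    rw [habel x hx y hy] at h0
    have hEq : J (⁅J x, y⁆ - ⁅J y, x⁆) = ⁅J x, J y⁆ := by
      have hsk : ⁅x, J y⁆ = -⁅J y, x⁆ := (lie_skew _ _).symm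
      rw [hsk, map_neg] at h0
      rw [map_sub]
      refine sub_eq_zero.mp ?_
      calc J ⁅J x, y⁆ - J ⁅J y, x⁆ - ⁅J x, J y⁆
          = 0 - ⁅J x, J y⁆ + J ⁅J x, y⁆ + -J ⁅J y, x⁆ := by abel
        _ = 0 := h0
    rw [hmem]
    exact ⟨sub_mem (hcomm _ _) (hcomm _ _), by rw [hEq]; exact hcomm _ _⟩
  -- existence of coordinates
  have hexists : ∀ z ∈ a.toSubmodule, ∃ s t : ℝ, z - (s • x₁ + t • y₁) ∈ aJ := by
    intro z hz
    rw [hspanx₁] at hz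
    rcases Submodule.mem_sup.mp hz with ⟨w, hw, p, hp, hwp⟩
    rcases Submodule.mem_sup.mp hw with ⟨u, hu, q, hq, huq⟩
    rcases Submodule.mem_span_singleton.mp hq with ⟨s, rfl⟩
    rcases Submodule.mem_span_singleton.mp hp with ⟨t, rfl⟩
    refine ⟨s, t, ?_⟩
    have : z - (s • x₁ + t • y₁) = u := by rw [← hwp, ← huq]; abel
    rw [this]; exact hu
  -- uniqueness of coordinates
  have huniq : ∀ z : L, ∀ s t s' t' : ℝ, z - (s • x₁ + t • y₁) ∈ aJ →
      z - (s' • x₁ + t' • y₁) ∈ aJ → s = s' ∧ t = t' := by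
    intro z s t s' t' h1 h2
    have hu : (z - (s • x₁ + t • y₁)) - (z - (s' • x₁ + t' • y₁)) ∈ aJ :=
      sub_mem h1 h2
    have h0 : (s - s') • x₁ + (t - t') • y₁ +
        ((z - (s • x₁ + t • y₁)) - (z - (s' • x₁ + t' • y₁))) = 0 := by
      simp only [sub_smul]
      abel
    obtain ⟨hs, ht⟩ := hindepx₁ (s - s') (t - t') _ hu h0
    constructor <;> linarith
  -- additivity lemmas for representation
  have hPsmul : ∀ (z : L) (s t r : ℝ), z - (s • x₁ + t • y₁) ∈ aJ →
      r • z - ((r * s) • x₁ + (r * t) • y₁) ∈ aJ := by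
    intro z s t r h
    have : r • z - ((r * s) • x₁ + (r * t) • y₁) = r • (z - (s • x₁ + t • y₁)) := by
      simp only [smul_sub, smul_add, mul_smul]
    rw [this]
    exact Submodule.smul_mem _ _ h
  have hPadd : ∀ (z w : L) (s t p q : ℝ), z - (s • x₁ + t • y₁) ∈ aJ →
      w - (p • x₁ + q • y₁) ∈ aJ →
      (z + w) - ((s + p) • x₁ + (t + q) • y₁) ∈ aJ := by
    intro z w s t p q h1 h2
    have : (z + w) - ((s + p) • x₁ + (t + q) • y₁) =
        (z - (s • x₁ + t • y₁)) + (w - (p • x₁ + q • y₁)) := by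
      simp only [add_smul]; abel
    rw [this]
    exact add_mem h1 h2
  have hPtrans : ∀ (z w : L) (s t : ℝ), z - w ∈ aJ → w - (s • x₁ + t • y₁) ∈ aJ →
      z - (s • x₁ + t • y₁) ∈ aJ := by
    intro z w s t h1 h2
    have : z - (s • x₁ + t • y₁) = (z - w) + (w - (s • x₁ + t • y₁)) := by abel
    rw [this]; exact add_mem h1 h2
  -- bracket representation lemma
  have hbr : ∀ w ∈ a.toSubmodule, ∀ p q r s : ℝ,
      ⁅J w, x₁⁆ - (p • x₁ + q • y₁) ∈ aJ → ⁅J w, y₁⁆ - (r • x₁ + s • y₁) ∈ aJ →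
      ∀ z ∈ a.toSubmodule, ∀ st tt : ℝ, z - (st • x₁ + tt • y₁) ∈ aJ →
      ⁅J w, z⁆ - ((st * p + tt * r) • x₁ + (st * q + tt * s) • y₁) ∈ aJ := by
    intro w hw p q r s hwx hwy z hz st tt hzr
    have hz' : z = st • x₁ + tt • y₁ + (z - (st • x₁ + tt • y₁)) := by abel
    have key : ⁅J w, z⁆ - ((st * p + tt * r) • x₁ + (st * q + tt * s) • y₁) =
        st • (⁅J w, x₁⁆ - (p • x₁ + q • y₁)) + tt • (⁅J w, y₁⁆ - (r • x₁ + s • y₁))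
        + ⁅J w, z - (st • x₁ + tt • y₁)⁆ := by
      conv_lhs => rw [hz']
      rw [lie_add, lie_add, lie_smul, lie_smul]
      simp only [smul_sub, smul_add, mul_smul, add_smul, mul_comm]
      module
    rw [key]
    exact add_mem (add_mem (Submodule.smul_mem _ _ hwx) (Submodule.smul_mem _ _ hwy))
      (hbaJ w hw _ hzr)
  -- representations of basic brackets
  have hPyx : ⁅J y₁, x₁⁆ - (c₁ • x₁ + d₁ • y₁) ∈ aJ := by
    have hD := hdiff x₁ hx₁ y₁ hy₁
    have : ⁅J y₁, x₁⁆ - (c₁ • x₁ + d₁ • y₁) =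
        (⁅J x₁, y₁⁆ - (c₁ • x₁ + d₁ • y₁)) - (⁅J x₁, y₁⁆ - ⁅J y₁, x₁⁆) := by abel
    rw [this]
    exact sub_mem h12 hD
  obtain ⟨c', d', hPyy⟩ := hexists ⁅J y₁, y₁⁆ (hcomm _ _)
  -- commutation of ad(J x₁) and ad(J y₁) on a
  have hJac : ∀ z ∈ a.toSubmodule, ⁅J x₁, ⁅J y₁, z⁆⁆ = ⁅J y₁, ⁅J x₁, z⁆⁆ := by
    intro z hz
    have h0 : ⁅⁅J x₁, J y₁⁆, z⁆ = 0 := habel _ (hcomm _ _) z hz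
    rw [lie_lie] at h0
    exact sub_eq_zero.mp h0
  -- E equations from commutation
  have hE12 : c₁ * a₁ + d₁ * c₁ = a₁ * c₁ + b₁ * c' ∧
      c₁ * b₁ + d₁ * d₁ = a₁ * d₁ + b₁ * d' := by
    have hL : ⁅J x₁, ⁅J y₁, x₁⁆⁆ - ((c₁ * a₁ + d₁ * c₁) • x₁ + (c₁ * b₁ + d₁ * d₁) • y₁) ∈ aJ :=
      hbr x₁ hx₁ a₁ b₁ c₁ d₁ h11 h12 ⁅J y₁, x₁⁆ (hcomm _ _) c₁ d₁ hPyx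
    have hR : ⁅J y₁, ⁅J x₁, x₁⁆⁆ - ((a₁ * c₁ + b₁ * c') • x₁ + (a₁ * d₁ + b₁ * d') • y₁) ∈ aJ :=
      hbr y₁ hy₁ c₁ d₁ c' d' hPyx hPyy ⁅J x₁, x₁⁆ (hcomm _ _) a₁ b₁ h11
    rw [hJac x₁ hx₁] at hL
    exact huniq _ _ _ _ _ hL hR
  have hE34 : c' * a₁ + d' * c₁ = c₁ * c₁ + d₁ * c' ∧
      c' * b₁ + d' * d₁ = c₁ * d₁ + d₁ * d' := by
    have hL : ⁅J x₁, ⁅J y₁, y₁⁆⁆ - ((c' * a₁ + d' * c₁) • x₁ + (c' * b₁ + d' * d₁) • y₁) ∈ aJ :=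
      hbr x₁ hx₁ a₁ b₁ c₁ d₁ h11 h12 ⁅J y₁, y₁⁆ (hcomm _ _) c' d' hPyy
    have hR : ⁅J y₁, ⁅J x₁, y₁⁆⁆ - ((c₁ * c₁ + d₁ * c') • x₁ + (c₁ * d₁ + d₁ * d') • y₁) ∈ aJ :=
      hbr y₁ hy₁ c₁ d₁ c' d' hPyx hPyy ⁅J x₁, y₁⁆ (hcomm _ _) c₁ d₁ h12
    rw [hJac y₁ hy₁] at hL
    exact huniq _ _ _ _ _ hL hR
  obtain ⟨hE1, hE2⟩ := hE12
  obtain ⟨hE3, hE4⟩ := hE34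
  -- coordinates of x₂, y₂
  obtain ⟨α, β, hPx2⟩ := hexists x₂ hx₂
  obtain ⟨γ, δ, hPy2⟩ := hexists y₂ hy₂
  -- bracket with J x₂
  have hbx2 : ∀ z ∈ a.toSubmodule, ∀ s t : ℝ, z - (s • x₁ + t • y₁) ∈ aJ →
      ⁅J x₂, z⁆ - ((α * (s * a₁ + t * c₁) + β * (s * c₁ + t * c')) • x₁ +
        (α * (s * b₁ + t * d₁) + β * (s * d₁ + t * d')) • y₁) ∈ aJ := by
    intro z hz s t hPz
    have h1 := hbr x₁ hx₁ a₁ b₁ c₁ d₁ h11 h12 z hz s t hPz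
    have h2 := hbr y₁ hy₁ c₁ d₁ c' d' hPyx hPyy z hz s t hPz
    have hcombo := hPadd _ _ _ _ _ _ (hPsmul _ _ _ α h1) (hPsmul _ _ _ β h2)
    have hJu0 : ⁅J (x₂ - (α • x₁ + β • y₁)), z⁆ = 0 :=
      habel _ (hJaJ _ hPx2) z hz
    have hEq : ⁅J x₂, z⁆ = α • ⁅J x₁, z⁆ + β • ⁅J y₁, z⁆ := by
      have hJ2 : J x₂ = α • J x₁ + β • J y₁ + J (x₂ - (α • x₁ + β • y₁)) := by
        rw [map_sub, map_add, map_smul, map_smul]; abel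
      rw [hJ2, add_lie, add_lie, smul_lie, smul_lie, hJu0, add_zero]
    rw [hEq]
    exact hcombo
  -- G equations
  have hG12 : α * (α * a₁ + β * c₁) + β * (α * c₁ + β * c') = a₂ * α + b₂ * γ ∧
      α * (α * b₁ + β * d₁) + β * (α * d₁ + β * d') = a₂ * β + b₂ * δ := by
    have hL := hbx2 x₂ hx₂ α β hPx2
    have hR : (a₂ • x₂ + b₂ • y₂) - ((a₂ * α + b₂ * γ) • x₁ + (a₂ * β + b₂ * δ) • y₁) ∈ aJ :=
      hPadd _ _ _ _ _ _ (hPsmul _ _ _ a₂ hPx2) (hPsmul _ _ _ b₂ hPy2)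
    have hL' := hPtrans _ _ _ _ h21 hR
    exact huniq _ _ _ _ _ hL hL'
  have hG34 : α * (γ * a₁ + δ * c₁) + β * (γ * c₁ + δ * c') = c₂ * α + d₂ * γ ∧
      α * (γ * b₁ + δ * d₁) + β * (γ * d₁ + δ * d') = c₂ * β + d₂ * δ := by
    have hL := hbx2 y₂ hy₂ γ δ hPy2
    have hR : (c₂ • x₂ + d₂ • y₂) - ((c₂ * α + d₂ * γ) • x₁ + (c₂ * β + d₂ * δ) • y₁) ∈ aJ :=
      hPadd _ _ _ _ _ _ (hPsmul _ _ _ c₂ hPx2) (hPsmul _ _ _ d₂ hPy2)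
    have hL' := hPtrans _ _ _ _ h22 hR
    exact huniq _ _ _ _ _ hL hL'
  obtain ⟨hG1, hG2⟩ := hG12
  obtain ⟨hG3, hG4⟩ := hG34
  -- invertibility of the change of basis
  have hMdet : α * δ - β * γ ≠ 0 := by
    intro h0
    have hz1 : (δ • x₂ + (-β) • y₂) - ((δ * α + (-β) * γ) • x₁ + (δ * β + (-β) * δ) • y₁) ∈ aJ :=
      hPadd _ _ _ _ _ _ (hPsmul _ _ _ δ hPx2) (hPsmul _ _ _ (-β) hPy2)
    have hc1 : δ * α + (-β) * γ = 0 := by linarith [h0]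
    have hc2 : δ * β + (-β) * δ = 0 := by ring
    rw [hc1, hc2] at hz1
    have hz1' : δ • x₂ + (-β) • y₂ ∈ aJ := by
      have : (δ • x₂ + (-β) • y₂) - ((0:ℝ) • x₁ + (0:ℝ) • y₁) = δ • x₂ + (-β) • y₂ := by
        simp
      rwa [this] at hz1
    obtain ⟨hδ, hβ⟩ := hindepx₂ δ (-β) (-(δ • x₂ + (-β) • y₂)) (neg_mem hz1')
      (by abel)
    have hz2 : ((-γ) • x₂ + α • y₂) - (((-γ) * α + α * γ) • x₁ + ((-γ) * β + α * δ) • y₁) ∈ aJ :=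
      hPadd _ _ _ _ _ _ (hPsmul _ _ _ (-γ) hPx2) (hPsmul _ _ _ α hPy2)
    have hd1 : (-γ) * α + α * γ = 0 := by ring
    have hd2 : (-γ) * β + α * δ = 0 := by linarith [h0]
    rw [hd1, hd2] at hz2
    have hz2' : (-γ) • x₂ + α • y₂ ∈ aJ := by
      have : ((-γ) • x₂ + α • y₂) - ((0:ℝ) • x₁ + (0:ℝ) • y₁) = (-γ) • x₂ + α • y₂ := by
        simp
      rwa [this] at hz2
    obtain ⟨hγ, hα⟩ := hindepx₂ (-γ) α (-((-γ) • x₂ + α • y₂)) (neg_mem hz2')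
      (by abel)
    -- now α = β = 0, so x₂ ∈ aJ
    have hx2aJ : x₂ ∈ aJ := by
      have hβ0 : β = 0 := by linarith
      have := hPx2
      rw [hα, hβ0] at this
      simpa using this
    obtain ⟨h10, -⟩ := hindepx₂ 1 0 (-x₂) (neg_mem hx2aJ) (by simp)
    exact one_ne_zero h10
  -- trace identity
  have hT1 : ((a₂ + d₂) - (α * (a₁ + d₁) + β * (c₁ + d'))) * (α * δ - β * γ) = 0 := by
    linear_combination (-δ) * hG1 + γ * hG2 + β * hG3 + (-α) * hG4
  have htrN : β * (c₁ + d') = 0 := by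
    rcases mul_eq_zero.mp hT1 with h | h
    · linear_combination -h + htr₂ - α * htr₁
    · exact absurd h hMdet
  -- determinant identity
  have hT2 : ((a₂ * d₂ - b₂ * c₂) -
      ((α * a₁ + β * c₁) * (α * d₁ + β * d') - (α * c₁ + β * c') * (α * b₁ + β * d₁)))
      * (α * δ - β * γ) = 0 := by
    linear_combination
      (-(α * (γ * b₁ + δ * d₁) + β * (γ * d₁ + δ * d'))) * hG1
      + (α * (γ * a₁ + δ * c₁) + β * (γ * c₁ + δ * c')) * hG2
      + (a₂ * β + b₂ * δ) * hG3 + (-(a₂ * α + b₂ * γ)) * hG4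
  have hdetEq : a₂ * d₂ - b₂ * c₂ =
      (α * a₁ + β * c₁) * (α * d₁ + β * d') - (α * c₁ + β * c') * (α * b₁ + β * d₁) := by
    rcases mul_eq_zero.mp hT2 with h | h
    · linarith
    · exact absurd h hMdet
  by_cases hβ : β = 0
  · -- β = 0 : determinants differ by α² > 0
    have hα : α ≠ 0 := by
      intro hα0
      apply hMdet
      rw [hα0, hβ]; ring
    have hEq2 : a₂ * d₂ - b₂ * c₂ = α ^ 2 * (a₁ * d₁ - b₁ * c₁) := by
      rw [hdetEq, hβ]; ring
    constructor
    · rw [hEq2]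
      nlinarith [sq_nonneg (α * (a₁ * d₁ - b₁ * c₁)), sq_nonneg α]
    · constructor
      · intro h; rw [hEq2, h, mul_zero]
      · intro h
        rw [hEq2] at h
        rcases mul_eq_zero.mp h with h' | h'
        · exact absurd h' (pow_ne_zero 2 hα)
        · exact h'
  · -- β ≠ 0 : both determinants vanish
    have hcd : c₁ + d' = 0 := by
      rcases mul_eq_zero.mp htrN with h | h
      · exact absurd h hβ
      · exact h
    have key1 : b₁ * c' = -(a₁ * c₁) := by linear_combination -hE1 + c₁ * htr₁
    have key2 : a₁ * a₁ + b₁ * c₁ = 0 := by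
      linear_combination (1/2 : ℝ) * hE2 - ((d₁ - 2 * a₁)/2) * htr₁ + (b₁/2) * hcd
    have key3 : a₁ * c' - c₁ * c₁ = 0 := by
      linear_combination (1/2 : ℝ) * hE3 + (c'/2) * htr₁ - (c₁/2) * hcd
    have hD1 : a₁ * d₁ - b₁ * c₁ = 0 := by
      linear_combination -key2 + a₁ * htr₁
    have hD2 : a₂ * d₂ - b₂ * c₂ = 0 := by
      have hda : d₁ = -a₁ := by linarith
      have hdp : d' = -c₁ := by linarith
      rw [hdetEq, hda, hdp]
      linear_combination (-(α^2)) * key2 - (α * β) * key1 + (β^2) * key3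
    rw [hD1, hD2]
    exact ⟨by simp, by simp⟩
end
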